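/- arXiv:2506.12868 — 2 statements merged into one kernel-verified Lean document; each statement's English description precedes it below -/
import Mathlib

section
/- For every D ⊆ [n−1] and every permutation σ of [n], K_{(D,σ)} = Σ_A 2^{|A|+1} M_{(A,σ)}, where the sum is over all A ⊆ [n−1] such that Peak(D) ⊆ A ∪ (A+1) with A+1 = {a+1 : a ∈ A}, as an equality of functions ([n] → ℕ₊) → ℚ. -/
/-- `σ` is a permutation of `[n] = {1,…,n}`: it fixes everything outside `[n]`. -/
def IsPermOn (n : ℕ) (σ : Equiv.Perm ℕ) : Prop :=
  ∀ i, i ∉ Finset.Icc 1 n → σ i = i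

/-- `SetComp(A,σ)`. -/
def setCompBlocks (n : ℕ) (A : Finset ℕ) (σ : Equiv.Perm ℕ) : List (Finset ℕ) :=
  ((0 :: (A.sort (· ≤ ·) ++ [n])).zip (A.sort (· ≤ ·) ++ [n])).map
    (fun p => (Finset.Icc (p.1 + 1) p.2).image (fun x => σ x))

open Classical in
noncomputable def MfunOfComp (φ : List (Finset ℕ)) : (ℕ → ℕ+) → ℚ := fun u =>
  if (∀ j ∈ φ.foldr (· ∪ ·) ∅, ∀ k ∈ φ.foldr (· ∪ ·) ∅,
      ((u j = u k ↔ φ.findIdx (fun B => decide (j ∈ B)) = φ.findIdx (fun B => decide (k ∈ B))) ∧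
       (u j < u k ↔ φ.findIdx (fun B => decide (j ∈ B)) < φ.findIdx (fun B => decide (k ∈ B)))))
  then 1 else 0

/-- The monomial quasisymmetric function in noncommuting variables `M_{(A,σ)}`. -/
noncomputable def Mfun (n : ℕ) (A : Finset ℕ) (σ : Equiv.Perm ℕ) : (ℕ → ℕ+) → ℚ :=
  MfunOfComp (setCompBlocks n A σ)

/-- The enriched order on nonzero integers: `−1 ≺ 1 ≺ −2 ≺ 2 ≺ ⋯`. -/
def enrLT (a b : ℤ) : Prop :=
  a.natAbs < b.natAbs ∨ (a.natAbs = b.natAbs ∧ a < 0 ∧ 0 < b)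

/-- `ℬ_D`: maps `f : [n] → ℤ ∖ {0}` (normalized to `1` outside `[n]`) such that for
`1 ≤ i ≤ n−1`: `f i ≺ f (i+1)`, or `f i = f (i+1) > 0` and `i ∉ D`, or
`f i = f (i+1) < 0` and `i ∈ D`. -/
def BsetChain (n : ℕ) (D : Finset ℕ) : Set (ℕ → ℤ) :=
  {f | (∀ j, j ∉ Finset.Icc 1 n → f j = 1) ∧ (∀ i ∈ Finset.Icc 1 n, f i ≠ 0) ∧
    ∀ i ∈ Finset.Icc 1 (n - 1),
      enrLT (f i) (f (i + 1)) ∨ (f i = f (i + 1) ∧ 0 < f i ∧ i ∉ D) ∨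
        (f i = f (i + 1) ∧ f i < 0 ∧ i ∈ D)}

/-- `K_{(D,σ)}(u) = #{f ∈ ℬ_D : |f(σ⁻¹ i)| = u i for all i ∈ [n]}`. -/
noncomputable def Kfun (n : ℕ) (D : Finset ℕ) (σ : Equiv.Perm ℕ) : (ℕ → ℕ+) → ℚ :=
  fun u => (Set.ncard {f ∈ BsetChain n D |
    ∀ i ∈ Finset.Icc 1 n, (f (σ.symm i)).natAbs = (u i : ℕ)} : ℚ)

/-- `Peak(D) = D ∖ ((D+1) ∪ {1})`. -/
def PeakOf (D : Finset ℕ) : Finset ℕ := D \ (D.image (· + 1) ∪ {1})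


def blocksAux (σ : Equiv.Perm ℕ) (n : ℕ) (s : ℕ) (L : List ℕ) : List (Finset ℕ) :=
  ((s :: (L ++ [n])).zip (L ++ [n])).map (fun p => (Finset.Icc (p.1 + 1) p.2).image (fun x => σ x))

lemma blocksAux_nil (σ : Equiv.Perm ℕ) (n s : ℕ) :
    blocksAux σ n s [] = [(Finset.Icc (s + 1) n).image (fun x => σ x)] := rfl

lemma blocksAux_cons (σ : Equiv.Perm ℕ) (n s l : ℕ) (L : List ℕ) :
    blocksAux σ n s (l :: L) =
      (Finset.Icc (s + 1) l).image (fun x => σ x) :: blocksAux σ n l L := rfl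

lemma setCompBlocks_eq (n : ℕ) (A : Finset ℕ) (σ : Equiv.Perm ℕ) :
    setCompBlocks n A σ = blocksAux σ n 0 (A.sort (· ≤ ·)) := rfl

lemma mem_image_perm (σ : Equiv.Perm ℕ) (x : ℕ) (I : Finset ℕ) :
    σ x ∈ I.image (fun y => σ y) ↔ x ∈ I := by
  constructor
  · rintro h
    obtain ⟨y, hy, hxy⟩ := Finset.mem_image.1 h
    rwa [← σ.injective hxy]
  · intro h; exact Finset.mem_image_of_mem _ h

lemma blocksAux_union (σ : Equiv.Perm ℕ) (n : ℕ) : ∀ (L : List ℕ) (s : ℕ),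
    (s :: (L ++ [n])).Pairwise (· < ·) →
    (blocksAux σ n s L).foldr (· ∪ ·) ∅ = (Finset.Icc (s + 1) n).image (fun x => σ x)
  | [], s, _ => by simp [blocksAux_nil]
  | (l :: L), s, hs => by
    have htail : (l :: (L ++ [n])).Pairwise (· < ·) := hs.of_cons
    have hsl : s < l := (List.pairwise_cons.1 hs).1 l (by simp)
    have hln : l < n := by
      have := (List.pairwise_cons.1 htail).1 n (by simp)
      exact this
    rw [blocksAux_cons]
    simp only [List.foldr_cons]
    rw [blocksAux_union σ n L l htail, ← Finset.image_union]
    congr 1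
    ext t
    simp only [Finset.mem_union, Finset.mem_Icc]
    omega

lemma blocksAux_findIdx (σ : Equiv.Perm ℕ) (n : ℕ) : ∀ (L : List ℕ) (s x : ℕ),
    (s :: (L ++ [n])).Pairwise (· < ·) → s < x → x ≤ n →
    (blocksAux σ n s L).findIdx (fun B => decide (σ x ∈ B)) =
      L.countP (fun a => decide (a < x))
  | [], s, x, _, hx1, hx2 => by
    rw [blocksAux_nil]
    rw [List.findIdx_cons]
    simp [mem_image_perm, Finset.mem_Icc, hx1, hx2, show s + 1 ≤ x by omega]
  | (l :: L), s, x, hs, hx1, hx2 => by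
    have htail : (l :: (L ++ [n])).Pairwise (· < ·) := hs.of_cons
    rw [blocksAux_cons, List.findIdx_cons]
    by_cases hxl : x ≤ l
    · have : σ x ∈ (Finset.Icc (s + 1) l).image (fun y => σ y) := by
        rw [mem_image_perm]; simp [Finset.mem_Icc]; omega
      simp only [this, decide_true, cond_true]
      rw [List.countP_cons]
      have h0 : ¬ (l < x) := by omega
      have hall : ∀ a ∈ L, ¬ (a < x) := by
        intro a ha
        have : l < a := (List.pairwise_cons.1 htail).1 a (by simp [ha])
        omega
      rw [List.countP_eq_zero.2 (by intro a ha; simpa using hall a ha)]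
      simp [h0]
    · have : ¬ (σ x ∈ (Finset.Icc (s + 1) l).image (fun y => σ y)) := by
        rw [mem_image_perm]; simp [Finset.mem_Icc]; omega
      simp only [this, decide_false, cond_false]
      rw [blocksAux_findIdx σ n L l x htail (by omega) hx2, List.countP_cons]
      simp [show l < x by omega]

lemma sorted_zero_sort (n : ℕ) (A : Finset ℕ) (hn : 1 ≤ n) (hA : A ⊆ Finset.Icc 1 (n - 1)) :
    (0 :: (A.sort (· ≤ ·) ++ [n])).Pairwise (· < ·) := by
  rw [List.pairwise_cons]
  constructor
  · intro b hb
    rcases List.mem_append.1 hb with h | h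
    · have := hA (Finset.mem_sort (α := ℕ) (· ≤ ·) |>.1 h)
      rw [Finset.mem_Icc] at this; omega
    · simp at h; omega
  · rw [List.pairwise_append]
    refine ⟨(Finset.sortedLT_sort A).pairwise, by simp, ?_⟩
    intro a ha b hb
    simp at hb
    have := hA (Finset.mem_sort (α := ℕ) (· ≤ ·) |>.1 ha)
    rw [Finset.mem_Icc] at this; omega

lemma iota_succ (A : Finset ℕ) (i : ℕ) :
    (A.filter (· < i + 1)).card = (A.filter (· < i)).card + (if i ∈ A then 1 else 0) := by
  by_cases hi : i ∈ A
  · have : A.filter (· < i + 1) = insert i (A.filter (· < i)) := by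
      ext a
      simp only [Finset.mem_filter, Finset.mem_insert]
      constructor
      · rintro ⟨ha, h⟩
        rcases Nat.lt_or_ge a i with h' | h'
        · exact Or.inr ⟨ha, h'⟩
        · exact Or.inl (by omega)
      · rintro (rfl | ⟨ha, h⟩)
        · exact ⟨hi, by omega⟩
        · exact ⟨ha, by omega⟩
    rw [this, Finset.card_insert_of_notMem (by simp), if_pos hi]
  · have : A.filter (· < i + 1) = A.filter (· < i) := by
      ext a
      simp only [Finset.mem_filter]
      constructor
      · rintro ⟨ha, h⟩
        refine ⟨ha, ?_⟩
        rcases Nat.lt_or_ge a i with h' | h'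
        · exact h'
        · exfalso; have : a = i := by omega
          exact hi (this ▸ ha)
      · rintro ⟨ha, h⟩; exact ⟨ha, by omega⟩
    rw [this, if_neg hi]
    omega

lemma countP_sort_eq (A : Finset ℕ) (x : ℕ) :
    (A.sort (· ≤ ·)).countP (fun a => decide (a < x)) = (A.filter (· < x)).card := by
  have h1 := List.Perm.countP_eq (fun a => decide (a < x)) (Finset.sort_perm_toList A (· ≤ ·))
  rw [h1, Finset.toList, ← Multiset.coe_countP, Multiset.coe_toList, Multiset.countP_eq_card_filter]
  rfl


lemma pairchar (n : ℕ) (hn : 1 ≤ n) (A : Finset ℕ) (hA : A ⊆ Finset.Icc 1 (n - 1))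
    (v : ℕ → ℕ) :
    (∀ x ∈ Finset.Icc 1 n, ∀ y ∈ Finset.Icc 1 n,
        ((v x = v y ↔ (A.filter (· < x)).card = (A.filter (· < y)).card) ∧
         (v x < v y ↔ (A.filter (· < x)).card < (A.filter (· < y)).card))) ↔
    (∀ i ∈ Finset.Icc 1 (n - 1), if i ∈ A then v i < v (i + 1) else v i = v (i + 1)) := by
  constructor
  · intro H i hi
    rw [Finset.mem_Icc] at hi
    have h1 : i ∈ Finset.Icc 1 n := by rw [Finset.mem_Icc]; omega
    have h2 : i + 1 ∈ Finset.Icc 1 n := by rw [Finset.mem_Icc]; omega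
    have hp := H i h1 (i + 1) h2
    have hsucc := iota_succ A i
    by_cases hiA : i ∈ A
    · rw [if_pos hiA]
      rw [if_pos hiA] at hsucc
      exact hp.2.mpr (by omega)
    · rw [if_neg hiA]
      rw [if_neg hiA] at hsucc
      exact hp.1.mpr (by omega)
  · intro H
    have helper : ∀ x, 1 ≤ x → ∀ y, x ≤ y → y ≤ n →
        v x ≤ v y ∧ (A.filter (· < x)).card ≤ (A.filter (· < y)).card ∧
        (v x = v y ↔ (A.filter (· < x)).card = (A.filter (· < y)).card) ∧
        (v x < v y ↔ (A.filter (· < x)).card < (A.filter (· < y)).card) := by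
      intro x hx y hxy
      induction y, hxy using Nat.le_induction with
      | base => intro _; exact ⟨le_refl _, le_refl _, by simp, by simp⟩
      | succ m hxm ih =>
        intro hmn
        have hprev := ih (by omega)
        have hm1 : m ∈ Finset.Icc 1 (n - 1) := by rw [Finset.mem_Icc]; omega
        have hstep := H m hm1
        have hsucc := iota_succ A m
        obtain ⟨p1, p2, p3, p4⟩ := hprev
        by_cases hmA : m ∈ A
        · rw [if_pos hmA] at hstep
          rw [if_pos hmA] at hsucc
          exact ⟨by omega, by omega, by omega, by omega⟩
        · rw [if_neg hmA] at hstep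
          rw [if_neg hmA] at hsucc
          exact ⟨by omega, by omega, by omega, by omega⟩
    intro x hx y hy
    rw [Finset.mem_Icc] at hx hy
    rcases le_or_gt x y with hxy | hxy
    · exact (helper x hx.1 y hxy hy.2).2.2
    · obtain ⟨p1, p2, p3, p4⟩ := helper y hy.1 x (by omega) hx.2
      exact ⟨by omega, by omega⟩

open Classical in
lemma mchar (n : ℕ) (hn : 1 ≤ n) (A : Finset ℕ) (hA : A ⊆ Finset.Icc 1 (n - 1))
    (σ : Equiv.Perm ℕ) (u : ℕ → ℕ+) :
    Mfun n A σ u =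
      if (∀ i ∈ Finset.Icc 1 (n - 1),
          if i ∈ A then (u (σ i) : ℕ) < (u (σ (i + 1)) : ℕ)
          else (u (σ i) : ℕ) = (u (σ (i + 1)) : ℕ)) then 1 else 0 := by
  have hsorted := sorted_zero_sort n A hn hA
  have hU : (setCompBlocks n A σ).foldr (· ∪ ·) ∅ = (Finset.Icc 1 n).image (fun x => σ x) := by
    rw [setCompBlocks_eq, blocksAux_union σ n _ 0 hsorted]
  have hidx : ∀ x ∈ Finset.Icc 1 n,
      (setCompBlocks n A σ).findIdx (fun B => decide (σ x ∈ B)) = (A.filter (· < x)).card := by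
    intro x hx
    rw [Finset.mem_Icc] at hx
    rw [setCompBlocks_eq, blocksAux_findIdx σ n _ 0 x hsorted (by omega) hx.2]
    exact countP_sort_eq A x
  rw [Mfun, MfunOfComp]
  have key : (∀ j ∈ (setCompBlocks n A σ).foldr (· ∪ ·) ∅,
      ∀ k ∈ (setCompBlocks n A σ).foldr (· ∪ ·) ∅,
      ((u j = u k ↔ (setCompBlocks n A σ).findIdx (fun B => decide (j ∈ B)) =
          (setCompBlocks n A σ).findIdx (fun B => decide (k ∈ B))) ∧
       (u j < u k ↔ (setCompBlocks n A σ).findIdx (fun B => decide (j ∈ B)) <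
          (setCompBlocks n A σ).findIdx (fun B => decide (k ∈ B))))) ↔
      (∀ x ∈ Finset.Icc 1 n, ∀ y ∈ Finset.Icc 1 n,
        (((u (σ x) : ℕ) = (u (σ y) : ℕ) ↔ (A.filter (· < x)).card = (A.filter (· < y)).card) ∧
         ((u (σ x) : ℕ) < (u (σ y) : ℕ) ↔ (A.filter (· < x)).card < (A.filter (· < y)).card))) := by
    constructor
    · intro H x hx y hy
      have hp := H (σ x) (by rw [hU]; exact Finset.mem_image_of_mem _ hx)
        (σ y) (by rw [hU]; exact Finset.mem_image_of_mem _ hy)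
      rw [hidx x hx, hidx y hy] at hp
      exact ⟨PNat.coe_inj.trans hp.1, (PNat.coe_lt_coe _ _).trans hp.2⟩
    · intro H j hj k hk
      rw [hU] at hj hk
      obtain ⟨x, hx, rfl⟩ := Finset.mem_image.1 hj
      obtain ⟨y, hy, rfl⟩ := Finset.mem_image.1 hk
      have hp := H x hx y hy
      rw [hidx x hx, hidx y hy]
      exact ⟨PNat.coe_inj.symm.trans hp.1, (PNat.coe_lt_coe _ _).symm.trans hp.2⟩
  have main := key.trans (pairchar n hn A hA (fun x => (u (σ x) : ℕ)))
  by_cases h : (∀ i ∈ Finset.Icc 1 (n - 1),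
      if i ∈ A then (u (σ i) : ℕ) < (u (σ (i + 1)) : ℕ)
      else (u (σ i) : ℕ) = (u (σ (i + 1)) : ℕ))
  · rw [if_pos (main.mpr h), if_pos h]
  · rw [if_neg (fun hc => h (main.mp hc)), if_neg h]

def okStep (D : Finset ℕ) (v : ℕ → ℕ) (S : Finset ℕ) (i : ℕ) : Prop :=
  v i < v (i + 1) ∨ (v i = v (i + 1) ∧
    ((i ∈ S ∧ i + 1 ∉ S) ∨ (i ∉ S ∧ i + 1 ∉ S ∧ i ∉ D) ∨ (i ∈ S ∧ i + 1 ∈ S ∧ i ∈ D)))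

open Classical in
noncomputable def GoodSet (D : Finset ℕ) (v : ℕ → ℕ) (m : ℕ) : Finset (Finset ℕ) :=
  (Finset.Icc 1 m).powerset.filter (fun S => ∀ i ∈ Finset.Icc 1 (m - 1), okStep D v S i)

lemma mem_GoodSet {D : Finset ℕ} {v : ℕ → ℕ} {m : ℕ} {S : Finset ℕ} :
    S ∈ GoodSet D v m ↔ S ⊆ Finset.Icc 1 m ∧ ∀ i ∈ Finset.Icc 1 (m - 1), okStep D v S i := by
  simp [GoodSet, Finset.mem_filter, Finset.mem_powerset]

lemma GoodSet_not_mem_top {D : Finset ℕ} {v : ℕ → ℕ} {m : ℕ} {S : Finset ℕ}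
    (hS : S ∈ GoodSet D v m) : m + 1 ∉ S := by
  intro h
  have := (mem_GoodSet.1 hS).1 h
  rw [Finset.mem_Icc] at this; omega

lemma okStep_erase {D : Finset ℕ} {v : ℕ → ℕ} {m i : ℕ} {S : Finset ℕ} (h : i + 1 ≤ m) :
    okStep D v (S.erase (m + 1)) i ↔ okStep D v S i := by
  have h1 : i ∈ S.erase (m + 1) ↔ i ∈ S := by
    rw [Finset.mem_erase]; constructor
    · exact fun h => h.2
    · exact fun hh => ⟨by omega, hh⟩
  have h2 : i + 1 ∈ S.erase (m + 1) ↔ i + 1 ∈ S := by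
    rw [Finset.mem_erase]; constructor
    · exact fun h => h.2
    · exact fun hh => ⟨by omega, hh⟩
  unfold okStep
  rw [h1, h2]

lemma mem_GoodSet_succ {D : Finset ℕ} {v : ℕ → ℕ} {m : ℕ} (hm : 1 ≤ m) {S : Finset ℕ} :
    S ∈ GoodSet D v (m + 1) ↔ S.erase (m + 1) ∈ GoodSet D v m ∧ okStep D v S m := by
  rw [mem_GoodSet, mem_GoodSet]
  have e1 : S ⊆ Finset.Icc 1 (m + 1) ↔ S.erase (m + 1) ⊆ Finset.Icc 1 m := by
    constructor
    · intro h a ha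
      rw [Finset.mem_erase] at ha
      have := h ha.2
      rw [Finset.mem_Icc] at *
      have hne := ha.1
      omega
    · intro h a ha
      by_cases hh : a = m + 1
      · rw [Finset.mem_Icc]; omega
      · have := h (Finset.mem_erase.2 ⟨hh, ha⟩)
        rw [Finset.mem_Icc] at *
        omega
  have e2 : (∀ i ∈ Finset.Icc 1 (m + 1 - 1), okStep D v S i) ↔
      ((∀ i ∈ Finset.Icc 1 (m - 1), okStep D v (S.erase (m + 1)) i) ∧ okStep D v S m) := by
    constructor
    · intro h
      constructor
      · intro i hi
        rw [Finset.mem_Icc] at hi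
        rw [okStep_erase (by omega)]
        exact h i (by rw [Finset.mem_Icc]; omega)
      · exact h m (by rw [Finset.mem_Icc]; omega)
    · rintro ⟨h1, h2⟩ i hi
      rw [Finset.mem_Icc] at hi
      by_cases hh : i = m
      · exact hh ▸ h2
      · rw [← okStep_erase (m := m) (by omega)]
        exact h1 i (by rw [Finset.mem_Icc]; omega)
  rw [e1, e2]
  tauto

lemma insert_injOn_GoodSet {D : Finset ℕ} {v : ℕ → ℕ} {m : ℕ} (G : Finset (Finset ℕ))
    (hG : ∀ S ∈ G, S ∈ GoodSet D v m) :
    Set.InjOn (insert (m + 1)) (G : Set (Finset ℕ)) := by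
  intro S hS S' hS' h
  have h1 : m + 1 ∉ S := GoodSet_not_mem_top (hG S hS)
  have h2 : m + 1 ∉ S' := GoodSet_not_mem_top (hG S' hS')
  have := congrArg (fun T => Finset.erase T (m + 1)) h
  simpa [Finset.erase_insert h1, Finset.erase_insert h2] using this

lemma disjoint_GoodSet_image {D : Finset ℕ} {v : ℕ → ℕ} {m : ℕ} (G G' : Finset (Finset ℕ))
    (hG : ∀ S ∈ G, S ∈ GoodSet D v m) (hG' : ∀ S ∈ G', S ∈ GoodSet D v m) :
    Disjoint G (G'.image (insert (m + 1))) := by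
  rw [Finset.disjoint_left]
  intro S hS hS'
  obtain ⟨S', hS', rfl⟩ := Finset.mem_image.1 hS'
  exact GoodSet_not_mem_top (hG _ hS) (Finset.mem_insert_self _ _)

-- strict case
lemma GoodSet_succ_strict {D : Finset ℕ} {v : ℕ → ℕ} {m : ℕ} (hm : 1 ≤ m)
    (h : v m < v (m + 1)) :
    GoodSet D v (m + 1) = GoodSet D v m ∪ (GoodSet D v m).image (insert (m + 1)) := by
  ext S
  rw [mem_GoodSet_succ hm, Finset.mem_union, Finset.mem_image]
  constructor
  · rintro ⟨h1, _⟩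
    by_cases ht : m + 1 ∈ S
    · exact Or.inr ⟨S.erase (m + 1), h1, Finset.insert_erase ht⟩
    · rw [Finset.erase_eq_of_notMem ht] at h1
      exact Or.inl h1
  · rintro (hS | ⟨S', hS', rfl⟩)
    · rw [Finset.erase_eq_of_notMem (GoodSet_not_mem_top hS)]
      exact ⟨hS, Or.inl h⟩
    · rw [Finset.erase_insert (GoodSet_not_mem_top hS')]
      exact ⟨hS', Or.inl h⟩

lemma GoodSet_succ_strict_filter {D : Finset ℕ} {v : ℕ → ℕ} {m : ℕ} (hm : 1 ≤ m)
    (h : v m < v (m + 1)) :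
    (GoodSet D v (m + 1)).filter (fun S => m + 1 ∈ S) =
      (GoodSet D v m).image (insert (m + 1)) := by
  rw [GoodSet_succ_strict hm h]
  ext S
  rw [Finset.mem_filter, Finset.mem_union]
  constructor
  · rintro ⟨hS | hS, ht⟩
    · exact absurd ht (GoodSet_not_mem_top hS)
    · exact hS
  · intro hS
    obtain ⟨S', hS', rfl⟩ := Finset.mem_image.1 hS
    exact ⟨Or.inr hS, Finset.mem_insert_self _ _⟩

-- equal, m ∈ D
lemma GoodSet_succ_eqD {D : Finset ℕ} {v : ℕ → ℕ} {m : ℕ} (hm : 1 ≤ m)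
    (h : v m = v (m + 1)) (hd : m ∈ D) :
    GoodSet D v (m + 1) = (GoodSet D v m).filter (fun S => m ∈ S) ∪
      ((GoodSet D v m).filter (fun S => m ∈ S)).image (insert (m + 1)) := by
  have hnlt : ¬ v m < v (m + 1) := by omega
  ext S
  rw [mem_GoodSet_succ hm, Finset.mem_union, Finset.mem_image]
  constructor
  · rintro ⟨h1, h2⟩
    rcases h2 with h2 | ⟨_, h2 | h2 | h2⟩
    · exact absurd h2 hnlt
    · have hmS : m ∈ S.erase (m + 1) := Finset.mem_erase.2 ⟨by omega, h2.1⟩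
      rw [Finset.erase_eq_of_notMem h2.2] at h1 hmS
      exact Or.inl (Finset.mem_filter.2 ⟨h1, hmS⟩)
    · exact absurd hd h2.2.2
    · have hmS : m ∈ S.erase (m + 1) := Finset.mem_erase.2 ⟨by omega, h2.1⟩
      refine Or.inr ⟨S.erase (m + 1), Finset.mem_filter.2 ⟨h1, hmS⟩, Finset.insert_erase h2.2.1⟩
  · rintro (hS | ⟨S', hS', rfl⟩)
    · rw [Finset.mem_filter] at hS
      rw [Finset.erase_eq_of_notMem (GoodSet_not_mem_top hS.1)]
      refine ⟨hS.1, Or.inr ⟨h, Or.inl ⟨hS.2, GoodSet_not_mem_top hS.1⟩⟩⟩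
    · rw [Finset.mem_filter] at hS'
      rw [Finset.erase_insert (GoodSet_not_mem_top hS'.1)]
      refine ⟨hS'.1, Or.inr ⟨h, Or.inr (Or.inr ⟨Finset.mem_insert_of_mem hS'.2,
        Finset.mem_insert_self _ _, hd⟩)⟩⟩

lemma GoodSet_succ_eqD_filter {D : Finset ℕ} {v : ℕ → ℕ} {m : ℕ} (hm : 1 ≤ m)
    (h : v m = v (m + 1)) (hd : m ∈ D) :
    (GoodSet D v (m + 1)).filter (fun S => m + 1 ∈ S) =
      ((GoodSet D v m).filter (fun S => m ∈ S)).image (insert (m + 1)) := by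
  rw [GoodSet_succ_eqD hm h hd]
  ext S
  rw [Finset.mem_filter, Finset.mem_union]
  constructor
  · rintro ⟨hS | hS, ht⟩
    · exact absurd ht (GoodSet_not_mem_top (Finset.mem_filter.1 hS).1)
    · exact hS
  · intro hS
    obtain ⟨S', hS', rfl⟩ := Finset.mem_image.1 hS
    exact ⟨Or.inr hS, Finset.mem_insert_self _ _⟩

-- equal, m ∉ D
lemma GoodSet_succ_eqND {D : Finset ℕ} {v : ℕ → ℕ} {m : ℕ} (hm : 1 ≤ m)
    (h : v m = v (m + 1)) (hd : m ∉ D) :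
    GoodSet D v (m + 1) = GoodSet D v m := by
  have hnlt : ¬ v m < v (m + 1) := by omega
  ext S
  rw [mem_GoodSet_succ hm]
  constructor
  · rintro ⟨h1, h2⟩
    rcases h2 with h2 | ⟨_, h2 | h2 | h2⟩
    · exact absurd h2 hnlt
    · rwa [Finset.erase_eq_of_notMem h2.2] at h1
    · rwa [Finset.erase_eq_of_notMem h2.2.1] at h1
    · exact absurd h2.2.2 hd
  · intro hS
    rw [Finset.erase_eq_of_notMem (GoodSet_not_mem_top hS)]
    refine ⟨hS, Or.inr ⟨h, ?_⟩⟩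
    by_cases hmS : m ∈ S
    · exact Or.inl ⟨hmS, GoodSet_not_mem_top hS⟩
    · exact Or.inr (Or.inl ⟨hmS, GoodSet_not_mem_top hS, hd⟩)

lemma GoodSet_succ_eqND_filter {D : Finset ℕ} {v : ℕ → ℕ} {m : ℕ} (hm : 1 ≤ m)
    (h : v m = v (m + 1)) (hd : m ∉ D) :
    (GoodSet D v (m + 1)).filter (fun S => m + 1 ∈ S) = ∅ := by
  rw [GoodSet_succ_eqND hm h hd]
  rw [Finset.filter_eq_empty_iff]
  intro S hS
  exact GoodSet_not_mem_top hS

-- decreasing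
lemma GoodSet_succ_gt {D : Finset ℕ} {v : ℕ → ℕ} {m : ℕ} (hm : 1 ≤ m)
    (h : v (m + 1) < v m) :
    GoodSet D v (m + 1) = ∅ := by
  rw [Finset.eq_empty_iff_forall_notMem]
  intro S hS
  obtain ⟨_, h2⟩ := (mem_GoodSet_succ hm).1 hS
  rcases h2 with h2 | ⟨h2, _⟩ <;> omega

def WIle (v : ℕ → ℕ) (m : ℕ) : Prop := ∀ i ∈ Finset.Icc 1 (m - 1), v i ≤ v (i + 1)

def Apos (v : ℕ → ℕ) (m : ℕ) : Finset ℕ :=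
  (Finset.Icc 1 (m - 1)).filter (fun i => v i < v (i + 1))

def PCnd (D : Finset ℕ) (v : ℕ → ℕ) (m : ℕ) : Prop :=
  ∀ d ∈ Finset.Icc 2 (m - 1), d ∈ D → (d - 1) ∉ D → (d ∈ Apos v m ∨ d - 1 ∈ Apos v m)

def LRD (D : Finset ℕ) (v : ℕ → ℕ) (m : ℕ) : Prop :=
  ∀ i ∈ Finset.Icc 1 (m - 1), (∀ j ∈ Finset.Icc i (m - 1), v j = v (j + 1)) → i ∈ D

lemma mem_Apos {v : ℕ → ℕ} {m i : ℕ} :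
    i ∈ Apos v m ↔ 1 ≤ i ∧ i ≤ m - 1 ∧ v i < v (i + 1) := by
  simp [Apos, Finset.mem_filter, Finset.mem_Icc, and_assoc]

lemma WIle_succ {v : ℕ → ℕ} {m : ℕ} (hm : 1 ≤ m) :
    WIle v (m + 1) ↔ WIle v m ∧ v m ≤ v (m + 1) := by
  unfold WIle
  constructor
  · intro h
    refine ⟨fun i hi => h i ?_, h m ?_⟩ <;> (rw [Finset.mem_Icc] at *; omega)
  · rintro ⟨h1, h2⟩ i hi
    rw [Finset.mem_Icc] at hi
    by_cases hh : i = m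
    · exact hh ▸ h2
    · exact h1 i (by rw [Finset.mem_Icc]; omega)

lemma Apos_succ_strict {v : ℕ → ℕ} {m : ℕ} (hm : 1 ≤ m) (h : v m < v (m + 1)) :
    Apos v (m + 1) = insert m (Apos v m) := by
  ext i
  rw [mem_Apos, Finset.mem_insert, mem_Apos]
  constructor
  · rintro ⟨h1, h2, h3⟩
    by_cases hh : i = m
    · exact Or.inl hh
    · exact Or.inr ⟨h1, by omega, h3⟩
  · rintro (rfl | ⟨h1, h2, h3⟩)
    · exact ⟨hm, by omega, h⟩
    · exact ⟨h1, by omega, h3⟩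

lemma Apos_succ_eq {v : ℕ → ℕ} {m : ℕ} (hm : 1 ≤ m) (h : ¬ v m < v (m + 1)) :
    Apos v (m + 1) = Apos v m := by
  ext i
  rw [mem_Apos, mem_Apos]
  constructor
  · rintro ⟨h1, h2, h3⟩
    refine ⟨h1, ?_, h3⟩
    by_cases hh : i = m
    · exact absurd (hh ▸ h3) h
    · omega
  · rintro ⟨h1, h2, h3⟩
    exact ⟨h1, by omega, h3⟩

lemma m_not_mem_Apos {v : ℕ → ℕ} {m : ℕ} (hm : 1 ≤ m) : m ∉ Apos v m := by
  rw [mem_Apos]; omega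

lemma PCnd_succ_strict {D : Finset ℕ} {v : ℕ → ℕ} {m : ℕ} (hm : 1 ≤ m)
    (h : v m < v (m + 1)) : (PCnd D v (m + 1) ↔ PCnd D v m) := by
  have hA := Apos_succ_strict hm h
  unfold PCnd
  constructor
  · intro H d hd hd1 hd2
    rw [Finset.mem_Icc] at hd
    have := H d (by rw [Finset.mem_Icc]; omega) hd1 hd2
    rw [hA, Finset.mem_insert, Finset.mem_insert] at this
    rcases this with (rfl | h1) | (h1 | h1)
    · omega
    · exact Or.inl h1
    · omega
    · exact Or.inr h1
  · intro H d hd hd1 hd2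
    rw [Finset.mem_Icc] at hd
    rw [hA, Finset.mem_insert, Finset.mem_insert]
    by_cases hh : d = m
    · exact Or.inl (Or.inl hh)
    · have := H d (by rw [Finset.mem_Icc]; omega) hd1 hd2
      tauto

lemma LRD_succ_strict {D : Finset ℕ} {v : ℕ → ℕ} {m : ℕ} (hm : 1 ≤ m)
    (h : v m < v (m + 1)) : LRD D v (m + 1) := by
  intro i hi hall
  exfalso
  rw [Finset.mem_Icc] at hi
  have := hall m (by rw [Finset.mem_Icc]; omega)
  omega

lemma PCnd_succ_to {D : Finset ℕ} {v : ℕ → ℕ} {m : ℕ} (hm : 1 ≤ m)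
    (h : ¬ v m < v (m + 1)) (H : PCnd D v (m + 1)) : PCnd D v m := by
  have hA := Apos_succ_eq hm h
  intro d hd hd1 hd2
  rw [Finset.mem_Icc] at hd
  have := H d (by rw [Finset.mem_Icc]; omega) hd1 hd2
  rwa [hA] at this

lemma PCnd_succ_eqND {D : Finset ℕ} {v : ℕ → ℕ} {m : ℕ} (hm : 1 ≤ m)
    (h : ¬ v m < v (m + 1)) (hd : m ∉ D) : (PCnd D v (m + 1) ↔ PCnd D v m) := by
  have hA := Apos_succ_eq hm h
  constructor
  · exact PCnd_succ_to hm h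
  · intro H d hdm hd1 hd2
    rw [Finset.mem_Icc] at hdm
    rw [hA]
    by_cases hh : d = m
    · exact absurd (hh ▸ hd1) hd
    · exact H d (by rw [Finset.mem_Icc]; omega) hd1 hd2

/-- downward induction: from `PCnd` at `m+1` (with `m ∈ D`, equal last step, weakly
increasing) we get that all steps of the last run are in `D`. -/
lemma LRD_of_PCnd_succ {D : Finset ℕ} {v : ℕ → ℕ} {m : ℕ} (hm : 1 ≤ m)
    (hW : WIle v m) (heq : v m = v (m + 1)) (hd : m ∈ D)
    (H : PCnd D v (m + 1)) : LRD D v m := by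
  have key : ∀ k i, i ∈ Finset.Icc 1 (m - 1) → m - 1 - i ≤ k →
      (∀ j ∈ Finset.Icc i (m - 1), v j = v (j + 1)) → i ∈ D := by
    intro k
    induction k with
    | zero =>
      intro i hi hik hall
      rw [Finset.mem_Icc] at hi
      have hieq : i = m - 1 := by omega
      subst hieq
      by_contra hnd
      have h2m : 2 ≤ m := by omega
      have := H m (by rw [Finset.mem_Icc]; omega) hd (by simpa using hnd)
      rcases this with h1 | h1 <;> rw [mem_Apos] at h1
      · omega
      · have := hall (m - 1) (by rw [Finset.mem_Icc]; omega)
        omega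
    | succ k ih =>
      intro i hi hik hall
      rw [Finset.mem_Icc] at hi
      by_cases hh : i = m - 1
      · subst hh
        by_contra hnd
        have h2m : 2 ≤ m := by omega
        have := H m (by rw [Finset.mem_Icc]; omega) hd (by simpa using hnd)
        rcases this with h1 | h1 <;> rw [mem_Apos] at h1
        · omega
        · have := hall (m - 1) (by rw [Finset.mem_Icc]; omega)
          omega
      · have hnext : i + 1 ∈ D := by
          refine ih (i + 1) (by rw [Finset.mem_Icc]; omega) (by omega) ?_
          intro j hj
          rw [Finset.mem_Icc] at hj
          exact hall j (by rw [Finset.mem_Icc]; omega)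
        by_contra hnd
        have := H (i + 1) (by rw [Finset.mem_Icc]; omega) hnext (by simpa using hnd)
        rcases this with h1 | h1 <;> rw [mem_Apos] at h1 <;>
          simp only [Nat.add_sub_cancel] at h1
        · have := hall (i + 1) (by rw [Finset.mem_Icc]; omega)
          omega
        · have := hall i (by rw [Finset.mem_Icc]; omega)
          omega
  intro i hi hall
  exact key (m - 1 - i) i hi (le_refl _) hall

lemma LRD_succ_eqD {D : Finset ℕ} {v : ℕ → ℕ} {m : ℕ} (hm : 1 ≤ m)
    (heq : v m = v (m + 1)) (hd : m ∈ D) : (LRD D v (m + 1) ↔ LRD D v m) := by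
  unfold LRD
  constructor
  · intro H i hi hall
    rw [Finset.mem_Icc] at hi
    refine H i (by rw [Finset.mem_Icc]; omega) ?_
    intro j hj
    rw [Finset.mem_Icc] at hj
    by_cases hh : j = m
    · exact hh ▸ heq
    · exact hall j (by rw [Finset.mem_Icc]; omega)
  · intro H i hi hall
    rw [Finset.mem_Icc] at hi
    by_cases hh : i = m
    · exact hh ▸ hd
    · refine H i (by rw [Finset.mem_Icc]; omega) ?_
      intro j hj
      rw [Finset.mem_Icc] at hj
      exact hall j (by rw [Finset.mem_Icc]; omega)

lemma LRD_succ_eqND {D : Finset ℕ} {v : ℕ → ℕ} {m : ℕ} (hm : 1 ≤ m)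
    (heq : v m = v (m + 1)) (hd : m ∉ D) : ¬ LRD D v (m + 1) := by
  intro H
  refine hd (H m (by rw [Finset.mem_Icc]; omega) ?_)
  intro j hj
  rw [Finset.mem_Icc] at hj
  have : j = m := by omega
  exact this ▸ heq

/-- converse direction used in the `else` branch of the `m ∈ D` equal case. -/
lemma PCnd_succ_of_LRD {D : Finset ℕ} {v : ℕ → ℕ} {m : ℕ} (hm : 1 ≤ m)
    (h : ¬ v m < v (m + 1)) (hW : WIle v m) (hP : PCnd D v m) (hL : LRD D v m) :
    PCnd D v (m + 1) := by
  have hA := Apos_succ_eq hm h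
  intro d hd hd1 hd2
  rw [Finset.mem_Icc] at hd
  rw [hA]
  by_cases hh : d = m
  · rcases Nat.lt_or_ge (v (m - 1)) (v m) with hlt | hge
    · right
      rw [hh, mem_Apos]
      refine ⟨by omega, by omega, ?_⟩
      have e : m - 1 + 1 = m := by omega
      rw [e]; exact hlt
    · exfalso
      apply hd2
      rw [hh]
      have hwe : v (m - 1) = v m := by
        have := hW (m - 1) (by rw [Finset.mem_Icc]; omega)
        have e : m - 1 + 1 = m := by omega
        rw [e] at this
        omega
      refine hL (m - 1) (by rw [Finset.mem_Icc]; omega) ?_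
      intro j hj
      rw [Finset.mem_Icc] at hj
      have : j = m - 1 := by omega
      subst this
      have e : m - 1 + 1 = m := by omega
      rw [e]; exact hwe
  · exact hP d (by rw [Finset.mem_Icc]; omega) hd1 hd2

lemma not_WIle_succ_gt {v : ℕ → ℕ} {m : ℕ} (hm : 1 ≤ m) (h : v (m + 1) < v m) :
    ¬ WIle v (m + 1) := by
  intro H
  have := H m (by rw [Finset.mem_Icc]; omega)
  omega

open Classical in
lemma count_main (D : Finset ℕ) (v : ℕ → ℕ) : ∀ m, 1 ≤ m →
    (GoodSet D v m).card =
      (if WIle v m ∧ PCnd D v m then 2 ^ ((Apos v m).card + 1) else 0) ∧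
    ((GoodSet D v m).filter (fun S => m ∈ S)).card =
      (if WIle v m ∧ PCnd D v m ∧ LRD D v m then 2 ^ (Apos v m).card else 0) := by
  intro m hm
  induction m, hm using Nat.le_induction with
  | base =>
    have hIcc0 : Finset.Icc 1 (1 - 1 : ℕ) = ∅ := by simp
    have hG : GoodSet D v 1 = (Finset.Icc 1 1).powerset := by
      ext S
      rw [mem_GoodSet, Finset.mem_powerset, hIcc0]
      simp
    have hW : WIle v 1 := by intro i hi; rw [hIcc0] at hi; exact absurd hi (Finset.notMem_empty i)
    have hP : PCnd D v 1 := by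
      intro d hd; rw [Finset.mem_Icc] at hd; omega
    have hL : LRD D v 1 := by
      intro i hi; rw [hIcc0] at hi; exact absurd hi (Finset.notMem_empty i)
    have hA : Apos v 1 = ∅ := by rw [Apos, hIcc0, Finset.filter_empty]
    constructor
    · rw [hG, if_pos ⟨hW, hP⟩, hA, Finset.card_powerset]
      simp
    · rw [hG, if_pos ⟨hW, hP, hL⟩, hA]
      have : ((Finset.Icc 1 1).powerset.filter (fun S => 1 ∈ S)) = {{1}} := by
        ext S
        rw [Finset.mem_filter, Finset.mem_powerset, Finset.Icc_self,
          Finset.subset_singleton_iff, Finset.mem_singleton]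
        constructor
        · rintro ⟨rfl | rfl, h2⟩
          · exact absurd h2 (Finset.notMem_empty 1)
          · rfl
        · rintro rfl
          exact ⟨Or.inr rfl, Finset.mem_singleton_self 1⟩
      rw [this]
      simp
  | succ m hm ih =>
    obtain ⟨ihT, ihN⟩ := ih
    rcases lt_trichotomy (v m) (v (m + 1)) with hlt | heq | hgt
    · -- strict case
      have hstruct := GoodSet_succ_strict (D := D) hm hlt
      have hfilt := GoodSet_succ_strict_filter (D := D) hm hlt
      have hinj := insert_injOn_GoodSet (D := D) (v := v) (m := m) (GoodSet D v m)
        (fun S hS => hS)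
      have hdisj := disjoint_GoodSet_image (D := D) (v := v) (m := m) (GoodSet D v m)
        (GoodSet D v m) (fun S hS => hS) (fun S hS => hS)
      have hcim : ((GoodSet D v m).image (insert (m + 1))).card = (GoodSet D v m).card :=
        Finset.card_image_of_injOn hinj
      have hcard : (GoodSet D v (m + 1)).card = 2 * (GoodSet D v m).card := by
        rw [hstruct, Finset.card_union_of_disjoint hdisj, hcim]; ring
      have hWiff := WIle_succ (v := v) hm
      have hPiff := PCnd_succ_strict (D := D) hm hlt
      have hAeq := Apos_succ_strict (v := v) hm hlt
      have hAcard : (Apos v (m + 1)).card = (Apos v m).card + 1 := by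
        rw [hAeq, Finset.card_insert_of_notMem (m_not_mem_Apos hm)]
      have hL' := LRD_succ_strict (D := D) hm hlt
      constructor
      · rw [hcard, ihT, hAcard]
        by_cases h : WIle v m ∧ PCnd D v m
        · rw [if_pos h, if_pos ⟨hWiff.2 ⟨h.1, by omega⟩, hPiff.2 h.2⟩]
          ring
        · rw [if_neg h,
            if_neg (fun hc : WIle v (m + 1) ∧ PCnd D v (m + 1) =>
              h ⟨(hWiff.1 hc.1).1, hPiff.1 hc.2⟩)]
      · rw [hfilt, hcim, ihT, hAcard]
        by_cases h : WIle v m ∧ PCnd D v m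
        · rw [if_pos h, if_pos ⟨hWiff.2 ⟨h.1, by omega⟩, hPiff.2 h.2, hL'⟩]
        · rw [if_neg h,
            if_neg (fun hc : WIle v (m + 1) ∧ PCnd D v (m + 1) ∧ LRD D v (m + 1) =>
              h ⟨(hWiff.1 hc.1).1, hPiff.1 hc.2.1⟩)]
    · -- equal case
      have hnlt : ¬ v m < v (m + 1) := by omega
      have hWiff := WIle_succ (v := v) hm
      have hAeq := Apos_succ_eq (v := v) hm hnlt
      by_cases hd : m ∈ D
      · -- m ∈ D
        have hstruct := GoodSet_succ_eqD (D := D) hm heq hd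
        have hfilt := GoodSet_succ_eqD_filter (D := D) hm heq hd
        set Nm := (GoodSet D v m).filter (fun S => m ∈ S) with hNm
        have hsub : ∀ S ∈ Nm, S ∈ GoodSet D v m := fun S hS => (Finset.mem_filter.1 hS).1
        have hinj := insert_injOn_GoodSet (D := D) (v := v) (m := m) Nm hsub
        have hdisj := disjoint_GoodSet_image (D := D) (v := v) (m := m) Nm Nm hsub hsub
        have hcim : (Nm.image (insert (m + 1))).card = Nm.card :=
          Finset.card_image_of_injOn hinj
        have hcard : (GoodSet D v (m + 1)).card = 2 * Nm.card := by
          rw [hstruct, Finset.card_union_of_disjoint hdisj, hcim]; ring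
        have hLiff := LRD_succ_eqD (D := D) hm heq hd
        constructor
        · rw [hcard, ihN, hAeq]
          by_cases h : WIle v (m + 1) ∧ PCnd D v (m + 1)
          · have hW : WIle v m := (hWiff.1 h.1).1
            have hP : PCnd D v m := PCnd_succ_to hm hnlt h.2
            have hL : LRD D v m := LRD_of_PCnd_succ hm hW heq hd h.2
            rw [if_pos ⟨hW, hP, hL⟩, if_pos h]
            ring
          · rw [if_neg h,
              if_neg (fun hc : WIle v m ∧ PCnd D v m ∧ LRD D v m =>
                h ⟨hWiff.2 ⟨hc.1, by omega⟩, PCnd_succ_of_LRD hm hnlt hc.1 hc.2.1 hc.2.2⟩)]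
        · rw [hfilt, hcim, ihN, hAeq]
          by_cases h : WIle v (m + 1) ∧ PCnd D v (m + 1)
          · have hW : WIle v m := (hWiff.1 h.1).1
            have hP : PCnd D v m := PCnd_succ_to hm hnlt h.2
            have hL : LRD D v m := LRD_of_PCnd_succ hm hW heq hd h.2
            rw [if_pos ⟨hW, hP, hL⟩, if_pos ⟨h.1, h.2, hLiff.2 hL⟩]
          · rw [if_neg (fun hc : WIle v m ∧ PCnd D v m ∧ LRD D v m =>
                h ⟨hWiff.2 ⟨hc.1, by omega⟩, PCnd_succ_of_LRD hm hnlt hc.1 hc.2.1 hc.2.2⟩),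
              if_neg (fun hc : WIle v (m + 1) ∧ PCnd D v (m + 1) ∧ LRD D v (m + 1) =>
                h ⟨hc.1, hc.2.1⟩)]
      · -- m ∉ D
        have hstruct := GoodSet_succ_eqND (D := D) hm heq hd
        have hfilt := GoodSet_succ_eqND_filter (D := D) hm heq hd
        have hPiff := PCnd_succ_eqND (D := D) hm hnlt hd
        have hL' := LRD_succ_eqND (D := D) hm heq hd
        constructor
        · rw [hstruct, ihT, hAeq]
          by_cases h : WIle v m ∧ PCnd D v m
          · rw [if_pos h, if_pos ⟨hWiff.2 ⟨h.1, by omega⟩, hPiff.2 h.2⟩]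
          · rw [if_neg h,
              if_neg (fun hc : WIle v (m + 1) ∧ PCnd D v (m + 1) =>
                h ⟨(hWiff.1 hc.1).1, hPiff.1 hc.2⟩)]
        · rw [hfilt,
            if_neg (fun hc : WIle v (m + 1) ∧ PCnd D v (m + 1) ∧ LRD D v (m + 1) =>
              hL' hc.2.2)]
          simp
    · -- decreasing case
      have hstruct := GoodSet_succ_gt (D := D) hm hgt
      have hW' := not_WIle_succ_gt (v := v) hm hgt
      constructor
      · rw [hstruct, if_neg (fun h => hW' h.1)]
        simp
      · rw [hstruct, if_neg (fun h => hW' h.1)]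
        simp

lemma permOn_maps {n : ℕ} {σ : Equiv.Perm ℕ} (hσ : IsPermOn n σ) :
    ∀ x ∈ Finset.Icc 1 n, σ x ∈ Finset.Icc 1 n := by
  intro x hx
  by_contra h
  have h1 : σ (σ x) = σ x := hσ (σ x) h
  have := σ.injective h1
  rw [this] at h
  exact h hx

lemma permOn_symm {n : ℕ} {σ : Equiv.Perm ℕ} (hσ : IsPermOn n σ) : IsPermOn n σ.symm := by
  intro i hi
  have := hσ i hi
  conv_lhs => rw [← this]
  exact σ.symm_apply_apply i

lemma kchar (n : ℕ) (hn : 1 ≤ n) (D : Finset ℕ) (σ : Equiv.Perm ℕ)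
    (hσ : IsPermOn n σ) (u : ℕ → ℕ+) :
    Kfun n D σ u = ((GoodSet D (fun x => (u (σ x) : ℕ)) n).card : ℚ) := by
  set v : ℕ → ℕ := fun x => (u (σ x) : ℕ) with hv
  have hvpos : ∀ x, 1 ≤ v x := fun x => (u (σ x)).2
  have hmem := permOn_maps hσ
  have hmem' := permOn_maps (permOn_symm hσ)
  set Φ : Finset ℕ → (ℕ → ℤ) := fun S j =>
    if j ∈ Finset.Icc 1 n then (if j ∈ S then -(v j : ℤ) else (v j : ℤ)) else 1 with hΦ
  have himg : {f ∈ BsetChain n D |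
      ∀ i ∈ Finset.Icc 1 n, (f (σ.symm i)).natAbs = (u i : ℕ)} =
      Φ '' ↑(GoodSet D v n) := by
    ext f
    rw [Set.mem_sep_iff, Set.mem_image]
    constructor
    · rintro ⟨hfB, hfu⟩
      obtain ⟨hout, hnz, hchain⟩ := hfB
      have habs : ∀ j ∈ Finset.Icc 1 n, (f j).natAbs = v j := by
        intro j hj
        have := hfu (σ j) (hmem j hj)
        rwa [σ.symm_apply_apply] at this
      refine ⟨(Finset.Icc 1 n).filter (fun j => f j < 0), ?_, ?_⟩
      · rw [Finset.mem_coe, mem_GoodSet]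
        refine ⟨Finset.filter_subset _ _, ?_⟩
        intro i hi
        rw [Finset.mem_Icc] at hi
        have hi1 : i ∈ Finset.Icc 1 n := by rw [Finset.mem_Icc]; omega
        have hi2 : i + 1 ∈ Finset.Icc 1 n := by rw [Finset.mem_Icc]; omega
        have ha1 := habs i hi1
        have ha2 := habs (i + 1) hi2
        have hmS : ∀ j, j ∈ Finset.Icc 1 n →
            (j ∈ (Finset.Icc 1 n).filter (fun j => f j < 0) ↔ f j < 0) := by
          intro j hj
          rw [Finset.mem_filter]
          tauto
        rw [okStep]
        rcases hchain i (by rw [Finset.mem_Icc]; omega) with h | h | h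
        · rcases h with h | ⟨h1, h2, h3⟩
          · left; omega
          · right
            refine ⟨by omega, Or.inl ⟨(hmS i hi1).2 h2, ?_⟩⟩
            rw [hmS (i + 1) hi2]; omega
        · right
          refine ⟨by omega, Or.inr (Or.inl ⟨?_, ?_, h.2.2⟩)⟩
          · rw [hmS i hi1]; omega
          · rw [hmS (i + 1) hi2]; omega
        · right
          refine ⟨by omega, Or.inr (Or.inr ⟨?_, ?_, h.2.2⟩)⟩
          · rw [hmS i hi1]; omega
          · rw [hmS (i + 1) hi2]; omega
      · funext j
        rw [hΦ]
        by_cases hj : j ∈ Finset.Icc 1 n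
        · have := habs j hj
          simp only [Finset.mem_filter, hj, if_true, true_and]
          by_cases hneg : f j < 0
          · rw [if_pos hneg]; omega
          · rw [if_neg hneg]; omega
        · simp only [hj, if_false]
          exact (hout j hj).symm
    · rintro ⟨S, hS, rfl⟩
      rw [Finset.mem_coe, mem_GoodSet] at hS
      obtain ⟨hSsub, hSok⟩ := hS
      have hval : ∀ j ∈ Finset.Icc 1 n, Φ S j = if j ∈ S then -(v j : ℤ) else (v j : ℤ) := by
        intro j hj
        rw [hΦ]
        simp only [hj, if_pos]
      have habs : ∀ j ∈ Finset.Icc 1 n, (Φ S j).natAbs = v j := by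
        intro j hj
        rw [hval j hj]
        by_cases h : j ∈ S <;> simp [h]
      refine ⟨⟨?_, ?_, ?_⟩, ?_⟩
      · intro j hj
        rw [hΦ]
        simp [hj]
      · intro i hi hc
        have h1 := hvpos i
        rw [hval i hi] at hc
        by_cases h : i ∈ S
        · rw [if_pos h] at hc; omega
        · rw [if_neg h] at hc; omega
      · intro i hi
        rw [Finset.mem_Icc] at hi
        have hi1 : i ∈ Finset.Icc 1 n := by rw [Finset.mem_Icc]; omega
        have hi2 : i + 1 ∈ Finset.Icc 1 n := by rw [Finset.mem_Icc]; omega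
        have hv1 := hval i hi1
        have hv2 := hval (i + 1) hi2
        have hp1 := hvpos i
        have hp2 := hvpos (i + 1)
        rcases hSok i (by rw [Finset.mem_Icc]; omega) with h | ⟨heq, hpat⟩
        · left
          rw [enrLT, habs i hi1, habs (i + 1) hi2]
          exact Or.inl h
        · rcases hpat with ⟨h1, h2⟩ | ⟨h1, h2, h3⟩ | ⟨h1, h2, h3⟩
          · left
            rw [enrLT, habs i hi1, habs (i + 1) hi2, hv1, hv2, if_pos h1, if_neg h2]
            right
            refine ⟨heq, by omega, by omega⟩
          · right; left
            rw [hv1, hv2, if_neg h1, if_neg h2]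
            refine ⟨by rw [heq], by omega, h3⟩
          · right; right
            rw [hv1, hv2, if_pos h1, if_pos h2]
            refine ⟨by rw [heq], by omega, h3⟩
      · intro i hi
        have hsymm : σ.symm i ∈ Finset.Icc 1 n := hmem' i hi
        rw [habs (σ.symm i) hsymm, hv]
        simp only [Equiv.apply_symm_apply]
  have hinj : Set.InjOn Φ ↑(GoodSet D v n) := by
    intro S hS S' hS' h
    rw [Finset.mem_coe, mem_GoodSet] at hS hS'
    ext a
    by_cases ha : a ∈ Finset.Icc 1 n
    · have := congrFun h a
      rw [hΦ] at this
      simp only [ha, if_pos] at this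
      have hp := hvpos a
      constructor
      · intro haS
        by_contra haS'
        rw [if_pos haS, if_neg haS'] at this
        omega
      · intro haS'
        by_contra haS
        rw [if_neg haS, if_pos haS'] at this
        omega
    · constructor
      · intro haS; exact absurd (hS.1 haS) ha
      · intro haS; exact absurd (hS'.1 haS) ha
  rw [Kfun, himg, Set.ncard_image_of_injOn hinj, Set.ncard_coe_finset]

lemma cond_iff (n : ℕ) (v : ℕ → ℕ) (A : Finset ℕ) (hA : A ⊆ Finset.Icc 1 (n - 1)) :
    (∀ i ∈ Finset.Icc 1 (n - 1), if i ∈ A then v i < v (i + 1) else v i = v (i + 1)) ↔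
      (WIle v n ∧ A = Apos v n) := by
  constructor
  · intro H
    constructor
    · intro i hi
      have := H i hi
      by_cases h : i ∈ A
      · rw [if_pos h] at this; omega
      · rw [if_neg h] at this; omega
    · ext i
      rw [mem_Apos]
      constructor
      · intro hiA
        have hi := hA hiA
        rw [Finset.mem_Icc] at hi
        have := H i (hA hiA)
        rw [if_pos hiA] at this
        exact ⟨hi.1, hi.2, this⟩
      · rintro ⟨h1, h2, h3⟩
        by_contra hiA
        have := H i (by rw [Finset.mem_Icc]; omega)
        rw [if_neg hiA] at this
        omega
  · rintro ⟨hW, rfl⟩ i hi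
    rw [Finset.mem_Icc] at hi
    by_cases h : i ∈ Apos v n
    · rw [if_pos h]
      exact (mem_Apos.1 h).2.2
    · rw [if_neg h]
      have := hW i (by rw [Finset.mem_Icc]; omega)
      rw [mem_Apos] at h
      omega

lemma peak_iff (n : ℕ) (D : Finset ℕ) (hD : D ⊆ Finset.Icc 1 (n - 1)) (v : ℕ → ℕ) :
    (PeakOf D ⊆ Apos v n ∪ (Apos v n).image (· + 1)) ↔ PCnd D v n := by
  have hmemPeak : ∀ d, d ∈ PeakOf D ↔ (d ∈ D ∧ 2 ≤ d ∧ d - 1 ∉ D) := by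
    intro d
    rw [PeakOf, Finset.mem_sdiff, Finset.mem_union, Finset.mem_singleton, Finset.mem_image]
    constructor
    · rintro ⟨h1, h2⟩
      push_neg at h2
      obtain ⟨h2, h3⟩ := h2
      have hd1 : 1 ≤ d := by
        have := hD h1; rw [Finset.mem_Icc] at this; omega
      refine ⟨h1, by omega, fun hc => h2 (d - 1) hc (by omega)⟩
    · rintro ⟨h1, h2, h3⟩
      refine ⟨h1, ?_⟩
      push_neg
      constructor
      · intro c hc hcd
        have : c = d - 1 := by omega
        exact absurd (this ▸ hc) h3
      · omega
  have hmemU : ∀ d, 2 ≤ d → (d ∈ Apos v n ∪ (Apos v n).image (· + 1) ↔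
      (d ∈ Apos v n ∨ d - 1 ∈ Apos v n)) := by
    intro d hd
    rw [Finset.mem_union, Finset.mem_image]
    constructor
    · rintro (h | ⟨c, hc, hcd⟩)
      · exact Or.inl h
      · right
        have : c = d - 1 := by omega
        exact this ▸ hc
    · rintro (h | h)
      · exact Or.inl h
      · exact Or.inr ⟨d - 1, h, by omega⟩
  constructor
  · intro H d hd h1 h2
    rw [Finset.mem_Icc] at hd
    have := H ((hmemPeak d).2 ⟨h1, by omega, h2⟩)
    exact (hmemU d (by omega)).1 this
  · intro H d hd
    rw [hmemPeak] at hd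
    obtain ⟨h1, h2, h3⟩ := hd
    have hdn : d ≤ n - 1 := by
      have := hD h1; rw [Finset.mem_Icc] at this; omega
    rw [hmemU d h2]
    exact H d (by rw [Finset.mem_Icc]; omega) h1 h3

/-- `K_{(D,σ)} = Σ_{A ⊆ [n−1], Peak(D) ⊆ A ∪ (A+1)} 2^{|A|+1} M_{(A,σ)}`. -/
theorem stmt8 (n : ℕ) (hn : 1 ≤ n) (D : Finset ℕ) (hD : D ⊆ Finset.Icc 1 (n - 1))
    (σ : Equiv.Perm ℕ) (hσ : IsPermOn n σ) :
    Kfun n D σ =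
      ∑ A ∈ (Finset.Icc 1 (n - 1)).powerset.filter
          (fun A => PeakOf D ⊆ A ∪ A.image (· + 1)),
        (2 ^ (A.card + 1) : ℚ) • Mfun n A σ := by
  classical
  funext u
  rw [Finset.sum_apply]
  simp only [Pi.smul_apply, smul_eq_mul]
  have hM : ∀ A ∈ (Finset.Icc 1 (n - 1)).powerset.filter
      (fun A => PeakOf D ⊆ A ∪ A.image (· + 1)),
      Mfun n A σ u = if (WIle (fun x => ((u (σ x) : ℕ))) n ∧
        A = Apos (fun x => ((u (σ x) : ℕ))) n) then 1 else 0 := by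
    intro A hA'
    rw [Finset.mem_filter, Finset.mem_powerset] at hA'
    rw [mchar n hn A hA'.1 σ u]
    have hiff := cond_iff n (fun x => ((u (σ x) : ℕ))) A hA'.1
    by_cases h : WIle (fun x => ((u (σ x) : ℕ))) n ∧
        A = Apos (fun x => ((u (σ x) : ℕ))) n
    · rw [if_pos (hiff.2 h), if_pos h]
    · rw [if_neg (fun hc => h (hiff.1 hc)), if_neg h]
  rw [Finset.sum_congr rfl (fun A hA' => by rw [hM A hA'])]
  rw [kchar n hn D σ hσ u, (count_main D (fun x => ((u (σ x) : ℕ))) n hn).1]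
  have hmems : Apos (fun x => ((u (σ x) : ℕ))) n ∈ (Finset.Icc 1 (n - 1)).powerset.filter
      (fun A => PeakOf D ⊆ A ∪ A.image (· + 1)) ↔ PCnd D (fun x => ((u (σ x) : ℕ))) n := by
    rw [Finset.mem_filter, Finset.mem_powerset]
    constructor
    · intro h
      exact (peak_iff n D hD _).1 h.2
    · intro h
      exact ⟨Finset.filter_subset _ _, (peak_iff n D hD _).2 h⟩
  by_cases hW : WIle (fun x => ((u (σ x) : ℕ))) n
  · simp only [hW, true_and, mul_ite, mul_one, mul_zero]
    rw [Finset.sum_ite_eq' _ (Apos (fun x => ((u (σ x) : ℕ))) n)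
      (fun A => (2 : ℚ) ^ (A.card + 1))]
    by_cases hP : PCnd D (fun x => ((u (σ x) : ℕ))) n
    · rw [if_pos hP, if_pos (hmems.2 hP)]
      push_cast
      ring
    · rw [if_neg hP, if_neg (fun hc => hP (hmems.1 hc))]
      simp
  · rw [if_neg (fun hc => hW hc.1)]
    rw [Finset.sum_eq_zero (fun A hA' => by rw [if_neg (fun hc => hW hc.1), mul_zero])]
    simp
end

section
/- Let A = {a_1 < ⋯ < a_k} ⊆ [n−1] be nonempty and let σ be a permutation of [n]. If n − a_k is odd, then ODiff(A) is an odd set and, writing B for the unique peak set satisfying Odd(B) = ODiff(A), Σ_{C : A ⊆ C ⊆ [n−1]} (−1)^{|C|} K_{(Peak(C),σ)} = (−1)^{n−1−|B|} η_{(B,σ)}. If n − a_k is even, then Σ_{C : A ⊆ C ⊆ [n−1]} (−1)^{|C|} K_{(Peak(C),σ)} = 0. -/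
/-- `B` is a peak set: `B ⊆ {2,…,n−1}` and `b ∈ B` implies `b−1 ∉ B` and `b+1 ∉ B`. -/
def IsPeakSet (n : ℕ) (B : Finset ℕ) : Prop :=
  B ⊆ Finset.Icc 2 (n - 1) ∧ ∀ b ∈ B, b - 1 ∉ B ∧ b + 1 ∉ B

/-- `Odd(B) = [n−1] ∖ (B ∪ (B−1))`. -/
def OddSetOf (n : ℕ) (B : Finset ℕ) : Finset ℕ :=
  Finset.Icc 1 (n - 1) \ (B ∪ B.image (fun b => b - 1))

/-- `A` is an odd set: all consecutive differences (with `a₀ = 0`, `a_{k+1} = n`) are odd. -/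
def IsOddSet (n : ℕ) (A : Finset ℕ) : Prop :=
  A ⊆ Finset.Icc 1 (n - 1) ∧
    ∀ a ∈ insert n A, Odd (a - ((A.filter (fun x => x < a)).sup id))

/-- `ODiff(A) = {a_i : a_i − a_{i−1} odd}` (with `a₀ = 0`): the elements of `A` whose
difference with their predecessor in `A ∪ {0}` is odd. -/
def ODiffOf (A : Finset ℕ) : Finset ℕ :=
  A.filter (fun a => Odd (a - ((A.filter (fun x => x < a)).sup id)))

/-- `η_{(B,σ)} = Σ_{C ⊆ B} (−1)^{|B|−|C|} K_{(C,σ)}`. -/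
noncomputable def etaFun (n : ℕ) (B : Finset ℕ) (σ : Equiv.Perm ℕ) : (ℕ → ℕ+) → ℚ :=
  ∑ C ∈ B.powerset, ((-1 : ℚ)) ^ (B.card - C.card) • Kfun n C σ


open Finset
open scoped Classical

/-- predecessor: largest element of `A` below `x` (0 if none). -/
def mA (A : Finset ℕ) (x : ℕ) : ℕ := (A.filter (· < x)).sup id

def scompat (n : ℕ) (A B : Finset ℕ) : Prop :=
  Odd (n - A.sup id) ∧ B ⊆ Finset.Icc 1 (n-1) ∧ ∀ b ∈ B, Even (b - mA A b)

noncomputable def fib (n : ℕ) (A B : Finset ℕ) : Finset (Finset ℕ) :=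
  ((Finset.Icc 1 (n-1)).powerset.filter (fun C => A ⊆ C ∧ PeakOf C = B))

noncomputable def Sval (n : ℕ) (A B : Finset ℕ) : ℚ :=
  ∑ C ∈ fib n A B, (-1 : ℚ) ^ C.card

lemma negpow_congr {a b : ℕ} (h : a % 2 = b % 2) : ((-1:ℚ))^a = (-1)^b := by
  rcases Nat.even_or_odd a with ha | ha
  · have hb : Even b := by
      rw [Nat.even_iff] at *; omega
    rw [ha.neg_one_pow, hb.neg_one_pow]
  · have hb : Odd b := by
      rw [Nat.odd_iff] at *; omega
    rw [ha.neg_one_pow, hb.neg_one_pow]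

lemma sup_id_eq_max' {C : Finset ℕ} (h : C.Nonempty) : C.sup id = C.max' h := by
  refine le_antisymm (Finset.sup_le fun b hb => C.le_max' b hb) ?_
  exact Finset.le_sup (f := id) (C.max'_mem h)

lemma sup_id_mem {C : Finset ℕ} (h : C.Nonempty) : C.sup id ∈ C := by
  rw [sup_id_eq_max' h]; exact C.max'_mem h

lemma le_sup_id {C : Finset ℕ} {x : ℕ} (h : x ∈ C) : x ≤ C.sup id :=
  Finset.le_sup (f := id) h

lemma mem_peakOf {D : Finset ℕ} {x : ℕ} :
    x ∈ PeakOf D ↔ x ∈ D ∧ x ≠ 1 ∧ ∀ d ∈ D, d + 1 ≠ x := by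
  simp only [PeakOf, Finset.mem_sdiff, Finset.mem_union, Finset.mem_image,
    Finset.mem_singleton, not_or, not_exists]
  aesop

/-- evaluation of the alternating geometric sum over an interval -/
lemma gsum (lo hi : ℕ) :
    (∑ α ∈ Finset.Icc lo hi, (-1 : ℚ) ^ α) =
      if lo ≤ hi ∧ Even (hi - lo) then (-1 : ℚ) ^ hi else 0 := by
  rcases le_or_gt lo hi with h | h
  · induction hi, h using Nat.le_induction with
    | base =>
      simp
    | succ m hm ih =>
      have hins : Finset.Icc lo (m+1) = insert (m+1) (Finset.Icc lo m) := by
        ext x; simp; omega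
      rw [hins, Finset.sum_insert (by simp), ih]
      by_cases he : Even (m - lo)
      · have h2 : ¬ Even (m + 1 - lo) := by
          rw [Nat.even_iff] at *; omega
        simp only [hm, he, and_self, if_true, h2, and_false, if_false, pow_succ]
        ring
      · have h2 : Even (m + 1 - lo) := by
          rw [Nat.even_iff] at *; omega
        simp only [hm, he, and_false, if_false, h2, Nat.le_succ_of_le hm, and_self, if_true]
        ring
  · rw [Finset.Icc_eq_empty (by omega)]
    simp only [Finset.sum_empty]
    rw [if_neg (by omega)]

lemma peakOf_subset {D : Finset ℕ} : PeakOf D ⊆ D := Finset.sdiff_subset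

/-- downward closure under no-peaks -/
lemma downward_closed {C : Finset ℕ} {m : ℕ} (hC : C ⊆ Finset.Icc 1 m)
    (hp : PeakOf C = ∅) : ∀ x ∈ C, ∀ y, 1 ≤ y → y ≤ x → y ∈ C := by
  intro x hx
  induction x with
  | zero => intro y h1 h2; omega
  | succ k ih =>
    intro y h1 h2
    rcases Nat.lt_or_ge y (k+1) with h | h
    · have hk : k ∈ C := by
        have : k + 1 ∉ PeakOf C := by rw [hp]; exact Finset.notMem_empty _
        rw [mem_peakOf] at this
        push_neg at this
        obtain ⟨d, hd, hdk⟩ := this hx (by omega)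
        have : d = k := by omega
        rwa [← this]
      exact ih hk y h1 (by omega)
    · have : y = k + 1 := by omega
      rwa [this]

lemma peak_empty_struct {C : Finset ℕ} {m : ℕ} (hC : C ⊆ Finset.Icc 1 m)
    (hp : PeakOf C = ∅) : C = Finset.Icc 1 (C.sup id) := by
  rcases C.eq_empty_or_nonempty with h | h
  · subst h; simp
  · ext y
    simp only [Finset.mem_Icc]
    constructor
    · intro hy
      have := hC hy
      simp only [Finset.mem_Icc] at this
      exact ⟨this.1, le_sup_id hy⟩
    · rintro ⟨h1, h2⟩
      exact downward_closed hC hp _ (sup_id_mem h) y h1 h2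

lemma peak_Icc_one (α : ℕ) : PeakOf (Finset.Icc 1 α) = ∅ := by
  ext x
  simp only [mem_peakOf, Finset.mem_Icc, Finset.notMem_empty, iff_false, not_and]
  intro h1 h2
  push_neg
  exact ⟨x - 1, by omega, by omega⟩

lemma peak_union_top {C' : Finset ℕ} {b c : ℕ} (hC' : C' ⊆ Finset.Icc 1 (b-2))
    (hb : 2 ≤ b) (hbc : b ≤ c) :
    PeakOf (C' ∪ Finset.Icc b c) = insert b (PeakOf C') := by
  have hC'lt : ∀ x ∈ C', 1 ≤ x ∧ x ≤ b - 2 := by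
    intro x hx; have := hC' hx; simp only [Finset.mem_Icc] at this; exact this
  ext x
  simp only [mem_peakOf, Finset.mem_union, Finset.mem_Icc, Finset.mem_insert]
  constructor
  · rintro ⟨hx, hx1, hall⟩
    rcases hx with hx | hx
    · right
      have h2 := hC'lt x hx
      refine ⟨hx, hx1, fun d hd => hall d (Or.inl hd)⟩
    · -- x in [b,c]; if x > b then x-1 ∈ Icc b c contradicts hall
      left
      by_contra hne
      have hx1' : b ≤ x - 1 := by omega
      exact hall (x-1) (Or.inr ⟨hx1', by omega⟩) (by omega)
  · rintro (rfl | hx)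
    · refine ⟨Or.inr ⟨le_refl _, hbc⟩, by omega, ?_⟩
      intro d hd
      rcases hd with hd | hd
      · have := hC'lt d hd; omega
      · omega
    · obtain ⟨h1, h2, h3⟩ := hx
      have hxb := hC'lt x h1
      refine ⟨Or.inl h1, h2, ?_⟩
      intro d hd
      rcases hd with hd | hd
      · exact h3 d hd
      · omega

/-- top run: everything in C above the max peak forms an interval down to it. -/
lemma top_run {C B : Finset ℕ} (hp : PeakOf C = B) {b : ℕ} (hb1 : 1 ≤ b) (hb : b ∈ B)
    (hmax : ∀ x ∈ B, x ≤ b) : ∀ x ∈ C, b ≤ x → Finset.Icc b x ⊆ C := by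
  intro x
  induction x with
  | zero =>
    intro hx h
    have : b = 0 := by omega
    omega
  | succ k ih =>
    intro hx hbk
    rcases Nat.lt_or_ge b (k+1) with h | h
    · have hnp : k + 1 ∉ B := fun hmem => by have := hmax _ hmem; omega
      rw [← hp, mem_peakOf] at hnp
      push_neg at hnp
      have hne1 : k + 1 ≠ 1 := by omega
      obtain ⟨d, hd, hdk⟩ := hnp hx hne1
      have hdc : k ∈ C := by
        have hdk2 : d = k := by omega
        rwa [hdk2] at hd
      have hIcc := ih hdc (by omega)
      intro y hy
      simp only [Finset.mem_Icc] at hy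
      rcases Nat.lt_or_ge y (k+1) with h2 | h2
      · exact hIcc (by simp only [Finset.mem_Icc]; omega)
      · have hy2 : y = k+1 := by omega
        rwa [hy2]
    · have hbe : b = k+1 := by omega
      intro y hy
      simp only [Finset.mem_Icc] at hy
      have hy2 : y = k+1 := by omega
      rwa [hy2]

lemma mem_fib {n : ℕ} {A B C : Finset ℕ} :
    C ∈ fib n A B ↔ C ⊆ Finset.Icc 1 (n-1) ∧ A ⊆ C ∧ PeakOf C = B := by
  simp [fib, Finset.mem_filter, Finset.mem_powerset, and_assoc]

lemma fib_step {n : ℕ} {A B : Finset ℕ} (hA : A ⊆ Finset.Icc 1 (n-1)) {b : ℕ}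
    (hb2 : 2 ≤ b) (hbn : b ≤ n-1) (hbB : b ∈ B) (hmax : ∀ x ∈ B, x ≤ b)
    (hb1A : b - 1 ∉ A) :
    Sval n A B =
      (∑ α ∈ Finset.Icc (max ((A.filter (b ≤ ·)).sup id + 1 - b) 1) (n - b), (-1:ℚ)^α)
        * Sval (b-1) (A.filter (· ≤ b-2)) (B.erase b) := by
  classical
  set lo := max ((A.filter (b ≤ ·)).sup id + 1 - b) 1 with hlo
  set Alow := A.filter (· ≤ b-2) with hAlow
  have hb21 : b - 1 - 1 = b - 2 := by omega
  -- the product index set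
  set t := (Finset.Icc lo (n-b)) ×ˢ fib (b-1) Alow (B.erase b) with ht
  have key : Sval n A B = ∑ p ∈ t, (-1:ℚ)^(p.1 + p.2.card) := by
    apply Finset.sum_nbij' (i := fun C => ((C.sup id + 1 - b, C.filter (· ≤ b-2)) : ℕ × Finset ℕ))
      (j := fun p => p.2 ∪ Finset.Icc b (b + p.1 - 1))
    · -- i maps into t
      intro C hC
      rw [mem_fib] at hC
      obtain ⟨hCI, hAC, hpC⟩ := hC
      have hbC : b ∈ C := peakOf_subset (hpC ▸ hbB)
      have hCne : C.Nonempty := ⟨b, hbC⟩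
      set M := C.sup id with hM
      have hMC : M ∈ C := sup_id_mem hCne
      have hbM : b ≤ M := le_sup_id hbC
      have hMn : M ≤ n - 1 := by have := hCI hMC; simp only [Finset.mem_Icc] at this; omega
      have hCbd : ∀ x ∈ C, 1 ≤ x ∧ x ≤ n-1 := by
        intro x hx; have := hCI hx; simpa using this
      simp only [ht, Finset.mem_product, Finset.mem_Icc]
      constructor
      · constructor
        · -- lo ≤ α
          rw [hlo]
          rcases (A.filter (b ≤ ·)).eq_empty_or_nonempty with he | hne
          · rw [he]; simp; omega
          · have hmem := sup_id_mem hne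
            simp only [Finset.mem_filter] at hmem
            have : (A.filter (b ≤ ·)).sup id ≤ M := le_sup_id (hAC hmem.1)
            omega
        · omega
      · rw [mem_fib, hb21]
        refine ⟨?_, ?_, ?_⟩
        · intro x hx
          simp only [Finset.mem_filter] at hx
          have := hCbd x hx.1
          simp only [Finset.mem_Icc]; omega
        · intro a ha
          rw [hAlow] at ha
          simp only [Finset.mem_filter] at ha ⊢
          exact ⟨hAC ha.1, ha.2⟩
        · -- PeakOf (C.filter (· ≤ b-2)) = B.erase b
          have hb1C : b - 1 ∉ C := by
            intro hcon
            have := (mem_peakOf.mp (hpC ▸ hbB)).2.2 (b-1) hcon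
            omega
          have hsplit : C = C.filter (· ≤ b - 2) ∪ Finset.Icc b M := by
            ext x
            simp only [Finset.mem_union, Finset.mem_filter, Finset.mem_Icc]
            constructor
            · intro hx
              rcases Nat.lt_or_ge x (b-1) with h | h
              · left; exact ⟨hx, by omega⟩
              · rcases Nat.eq_or_lt_of_le h with h2 | h2
                · exfalso; apply hb1C; rwa [h2]
                · right; exact ⟨by omega, le_sup_id hx⟩
            · rintro (⟨hx, _⟩ | ⟨h1, h2⟩)
              · exact hx
              · exact top_run hpC (by omega) hbB hmax M hMC hbM
                  (by simp only [Finset.mem_Icc]; omega)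
          have hlowsub : C.filter (· ≤ b-2) ⊆ Finset.Icc 1 (b-2) := by
            intro x hx
            simp only [Finset.mem_filter] at hx
            have := hCbd x hx.1
            simp only [Finset.mem_Icc]; omega
          have : PeakOf C = insert b (PeakOf (C.filter (· ≤ b-2))) := by
            conv_lhs => rw [hsplit]
            exact peak_union_top hlowsub hb2 hbM
          rw [hpC] at this
          have hbnotin : b ∉ PeakOf (C.filter (· ≤ b-2)) := by
            intro hcon
            have := hlowsub (peakOf_subset hcon)
            simp only [Finset.mem_Icc] at this; omega
          rw [this, Finset.erase_insert hbnotin]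
    · -- j maps into fib
      intro p hp
      simp only [ht, Finset.mem_product, Finset.mem_Icc] at hp
      obtain ⟨⟨hlo1, hhi⟩, hp2⟩ := hp
      rw [mem_fib, hb21] at hp2
      obtain ⟨hC'I, hAC', hpC'⟩ := hp2
      have hα1 : 1 ≤ p.1 := le_trans (le_max_right _ _) hlo1
      have hC'bd : ∀ x ∈ p.2, 1 ≤ x ∧ x ≤ b-2 := by
        intro x hx; have := hC'I hx; simpa using this
      rw [mem_fib]
      refine ⟨?_, ?_, ?_⟩
      · intro x hx
        simp only [Finset.mem_union, Finset.mem_Icc] at hx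
        simp only [Finset.mem_Icc]
        rcases hx with hx | hx
        · have := hC'bd x hx; omega
        · omega
      · intro a ha
        have haI := hA ha
        simp only [Finset.mem_Icc] at haI
        simp only [Finset.mem_union, Finset.mem_Icc]
        rcases Nat.lt_or_ge a (b-1) with h | h
        · left
          apply hAC'
          simp only [hAlow, Finset.mem_filter]
          exact ⟨ha, by omega⟩
        · rcases Nat.eq_or_lt_of_le h with h2 | h2
          · exfalso; apply hb1A; rwa [h2]
          · right
            have hloL : (A.filter (b ≤ ·)).sup id + 1 - b ≤ p.1 :=
              le_trans (le_max_left _ _) hlo1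
            have : a ≤ (A.filter (b ≤ ·)).sup id := by
              apply le_sup_id
              simp only [Finset.mem_filter]
              exact ⟨ha, by omega⟩
            omega
      · rw [peak_union_top hC'I hb2 (by omega), hpC', Finset.insert_erase hbB]
    · -- left inverse
      intro C hC
      rw [mem_fib] at hC
      obtain ⟨hCI, hAC, hpC⟩ := hC
      have hbC : b ∈ C := peakOf_subset (hpC ▸ hbB)
      have hCne : C.Nonempty := ⟨b, hbC⟩
      set M := C.sup id with hM
      have hMC : M ∈ C := sup_id_mem hCne
      have hbM : b ≤ M := le_sup_id hbC
      have hb1C : b - 1 ∉ C := by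
        intro hcon
        have := (mem_peakOf.mp (hpC ▸ hbB)).2.2 (b-1) hcon
        omega
      have harg : b + (M + 1 - b) - 1 = M := by omega
      simp only [harg]
      ext x
      simp only [Finset.mem_union, Finset.mem_filter, Finset.mem_Icc]
      constructor
      · rintro (⟨hx, _⟩ | ⟨h1, h2⟩)
        · exact hx
        · exact top_run hpC (by omega) hbB hmax M hMC hbM
            (by simp only [Finset.mem_Icc]; omega)
      · intro hx
        rcases Nat.lt_or_ge x (b-1) with h | h
        · left; exact ⟨hx, by omega⟩
        · rcases Nat.eq_or_lt_of_le h with h2 | h2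
          · exfalso; apply hb1C; rwa [h2]
          · right; exact ⟨by omega, le_sup_id hx⟩
    · -- right inverse
      intro p hp
      simp only [ht, Finset.mem_product, Finset.mem_Icc] at hp
      obtain ⟨⟨hlo1, hhi⟩, hp2⟩ := hp
      rw [mem_fib, hb21] at hp2
      obtain ⟨hC'I, hAC', hpC'⟩ := hp2
      have hα1 : 1 ≤ p.1 := le_trans (le_max_right _ _) hlo1
      have hC'bd : ∀ x ∈ p.2, 1 ≤ x ∧ x ≤ b-2 := by
        intro x hx; have := hC'I hx; simpa using this
      have hsup : (p.2 ∪ Finset.Icc b (b + p.1 - 1)).sup id = b + p.1 - 1 := by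
        apply le_antisymm
        · apply Finset.sup_le
          intro x hx
          simp only [Finset.mem_union, Finset.mem_Icc] at hx
          rcases hx with hx | hx
          · have := hC'bd x hx; simp only [id]; omega
          · simp only [id]; omega
        · apply le_sup_id
          simp only [Finset.mem_union, Finset.mem_Icc]
          right; omega
      have hfil : (p.2 ∪ Finset.Icc b (b + p.1 - 1)).filter (· ≤ b - 2) = p.2 := by
        rw [Finset.filter_union]
        have h1 : p.2.filter (· ≤ b-2) = p.2 :=
          Finset.filter_true_of_mem (fun x hx => (hC'bd x hx).2)
        have h2 : (Finset.Icc b (b + p.1 - 1)).filter (· ≤ b-2) = ∅ := by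
          apply Finset.filter_false_of_mem
          intro x hx
          simp only [Finset.mem_Icc] at hx
          omega
        rw [h1, h2, Finset.union_empty]
      rw [hsup, hfil]
      have : b + p.1 - 1 + 1 - b = p.1 := by omega
      rw [this]
    · -- summand equality
      intro C hC
      rw [mem_fib] at hC
      obtain ⟨hCI, hAC, hpC⟩ := hC
      have hbC : b ∈ C := peakOf_subset (hpC ▸ hbB)
      have hCne : C.Nonempty := ⟨b, hbC⟩
      set M := C.sup id with hM
      have hMC : M ∈ C := sup_id_mem hCne
      have hbM : b ≤ M := le_sup_id hbC
      have hb1C : b - 1 ∉ C := by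
        intro hcon
        have := (mem_peakOf.mp (hpC ▸ hbB)).2.2 (b-1) hcon
        omega
      have hsplit : C = C.filter (· ≤ b - 2) ∪ Finset.Icc b M := by
        ext x
        simp only [Finset.mem_union, Finset.mem_filter, Finset.mem_Icc]
        constructor
        · intro hx
          rcases Nat.lt_or_ge x (b-1) with h | h
          · left; exact ⟨hx, by omega⟩
          · rcases Nat.eq_or_lt_of_le h with h2 | h2
            · exfalso; apply hb1C; rwa [h2]
            · right; exact ⟨by omega, le_sup_id hx⟩
        · rintro (⟨hx, _⟩ | ⟨h1, h2⟩)
          · exact hx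
          · exact top_run hpC (by omega) hbB hmax M hMC hbM
              (by simp only [Finset.mem_Icc]; omega)
      have hdisj : Disjoint (C.filter (· ≤ b - 2)) (Finset.Icc b M) := by
        rw [Finset.disjoint_left]
        intro x hx hx2
        simp only [Finset.mem_filter] at hx
        simp only [Finset.mem_Icc] at hx2
        omega
      have hcard : C.card = (M + 1 - b) + (C.filter (· ≤ b-2)).card := by
        conv_lhs => rw [hsplit]
        rw [Finset.card_union_of_disjoint hdisj, Nat.card_Icc]
        omega
      rw [hcard]
  rw [key, ht, Finset.sum_product]
  simp only [Sval]
  rw [Finset.sum_mul_sum]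
  apply Finset.sum_congr rfl
  intro α _
  apply Finset.sum_congr rfl
  intro C' _
  rw [pow_add]

lemma mA_lt {A : Finset ℕ} {x : ℕ} (h : 0 < x) : mA A x < x := by
  rw [mA, Finset.sup_lt_iff (show (⊥:ℕ) < x from h)]
  intro a ha
  simp only [Finset.mem_filter] at ha
  exact ha.2

lemma le_mA {A : Finset ℕ} {x a : ℕ} (ha : a ∈ A) (h : a < x) : a ≤ mA A x :=
  Finset.le_sup (f := id) (Finset.mem_filter.mpr ⟨ha, h⟩)

lemma filterlt_eq_filterle {A : Finset ℕ} {b : ℕ} (hb : 1 ≤ b) (h : b - 1 ∉ A) :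
    A.filter (· < b) = A.filter (· ≤ b - 2) := by
  ext a
  simp only [Finset.mem_filter, and_congr_right_iff]
  intro haA
  have : a ≠ b - 1 := fun e => h (e ▸ haA)
  omega

lemma mA_lower {A : Finset ℕ} {b b' : ℕ} (h : b' ≤ b - 1) :
    mA (A.filter (· ≤ b - 2)) b' = mA A b' := by
  rw [mA, mA, Finset.filter_filter]
  congr 1
  ext a
  simp only [Finset.mem_filter]
  constructor
  · rintro ⟨h1, _, h3⟩; exact ⟨h1, h3⟩
  · rintro ⟨h1, h2⟩; exact ⟨h1, by omega, h2⟩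

lemma fib_empty {n : ℕ} {A : Finset ℕ} (hn : 1 ≤ n) (hA : A ⊆ Finset.Icc 1 (n-1)) :
    Sval n A ∅ = ∑ α ∈ Finset.Icc (A.sup id) (n-1), (-1:ℚ)^α := by
  apply Finset.sum_nbij' (i := fun C => C.sup id) (j := fun α => Finset.Icc 1 α)
  · intro C hC
    rw [mem_fib] at hC
    obtain ⟨hCI, hAC, hpC⟩ := hC
    simp only [Finset.mem_Icc]
    constructor
    · exact Finset.sup_mono hAC
    · apply Finset.sup_le
      intro x hx
      have := hCI hx
      simp only [Finset.mem_Icc] at this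
      exact this.2
  · intro α hα
    simp only [Finset.mem_Icc] at hα
    rw [mem_fib]
    refine ⟨?_, ?_, peak_Icc_one α⟩
    · intro x hx; simp only [Finset.mem_Icc] at hx ⊢; omega
    · intro a ha
      have h1 := hA ha
      simp only [Finset.mem_Icc] at h1 ⊢
      exact ⟨h1.1, le_trans (le_sup_id ha) hα.1⟩
  · intro C hC
    rw [mem_fib] at hC
    exact (peak_empty_struct hC.1 hC.2.2).symm
  · intro α hα
    simp only [Finset.mem_Icc] at hα
    rcases Nat.eq_zero_or_pos α with h | h
    · subst h; simp
    · apply le_antisymm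
      · apply Finset.sup_le; intro x hx; simp only [Finset.mem_Icc] at hx; exact hx.2
      · exact le_sup_id (by simp only [Finset.mem_Icc]; omega)
  · intro C hC
    rw [mem_fib] at hC
    have hcard : C.card = C.sup id := by
      conv_lhs => rw [peak_empty_struct hC.1 hC.2.2]
      rw [Nat.card_Icc]
      omega
    rw [hcard]

lemma Sval_zero {n : ℕ} {A B : Finset ℕ}
    (h : ∀ C, C ⊆ Finset.Icc 1 (n-1) → A ⊆ C → PeakOf C = B → False) :
    Sval n A B = 0 := by
  rw [Sval]
  have : fib n A B = ∅ := by
    apply Finset.eq_empty_of_forall_notMem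
    intro C hC
    rw [mem_fib] at hC
    exact h C hC.1 hC.2.1 hC.2.2
  rw [this, Finset.sum_empty]

lemma Sval_eq (n : ℕ) : 1 ≤ n → ∀ A : Finset ℕ, A ⊆ Finset.Icc 1 (n-1) → ∀ B : Finset ℕ,
    Sval n A B = if scompat n A B then (-1:ℚ)^(n-1-B.card) else 0 := by
  induction n using Nat.strong_induction_on with
  | _ n IH =>
  intro hn A hA B
  have hAbd : ∀ a ∈ A, 1 ≤ a ∧ a ≤ n - 1 := by
    intro a ha; have := hA ha; simpa using this
  have hsupA : A.sup id ≤ n - 1 := by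
    apply Finset.sup_le; intro a ha; exact (hAbd a ha).2
  by_cases hBI : B ⊆ Finset.Icc 1 (n-1)
  swap
  · rw [if_neg (fun h => hBI h.2.1)]
    apply Sval_zero
    intro C hCI _ hpC
    exact hBI (hpC ▸ (Finset.Subset.trans peakOf_subset hCI))
  rcases B.eq_empty_or_nonempty with rfl | hBne
  · rw [fib_empty hn hA, gsum]
    have hsc : scompat n A ∅ ↔ Odd (n - A.sup id) := by
      rw [scompat]
      simp
    by_cases h : Odd (n - A.sup id)
    · rw [if_pos ⟨hsupA, by rw [Nat.even_iff]; rw [Nat.odd_iff] at h; omega⟩,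
        if_pos (hsc.mpr h)]
      simp
    · have h1 : ¬(A.sup id ≤ n-1 ∧ Even (n-1-A.sup id)) := by
        rintro ⟨h2, h3⟩
        apply h
        rw [Nat.odd_iff]
        rw [Nat.even_iff] at h3
        omega
      rw [if_neg h1, if_neg (fun hc => h (hsc.mp hc))]
  -- B nonempty
  set b := B.max' hBne with hb
  have hbB : b ∈ B := B.max'_mem hBne
  have hmax : ∀ x ∈ B, x ≤ b := fun x hx => B.le_max' x hx
  have hbI : 1 ≤ b ∧ b ≤ n - 1 := by have := hBI hbB; simpa using this
  have hBbd : ∀ x ∈ B, 1 ≤ x ∧ x ≤ n - 1 := by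
    intro x hx; have := hBI hx; simpa using this
  by_cases hb2 : 2 ≤ b
  swap
  · -- b = 1, so 1 ∈ B : impossible peak, and scompat false
    have hb1 : b = 1 := by omega
    rw [if_neg ?_]
    · apply Sval_zero
      intro C _ _ hpC
      have : (1:ℕ) ∈ PeakOf C := hpC ▸ (hb1 ▸ hbB)
      exact (mem_peakOf.mp this).2.1 rfl
    · rintro ⟨_, _, h3⟩
      have := h3 b hbB
      rw [hb1] at this
      have hm : mA A 1 < 1 := mA_lt (by omega)
      rw [Nat.even_iff] at this
      omega
  by_cases hb1A : b - 1 ∈ A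
  · -- b-1 ∈ A : peak b impossible, and scompat false
    rw [if_neg ?_]
    · apply Sval_zero
      intro C _ hAC hpC
      have hpk := mem_peakOf.mp (hpC ▸ hbB)
      exact hpk.2.2 (b-1) (hAC hb1A) (by omega)
    · rintro ⟨_, _, h3⟩
      have h4 := h3 b hbB
      have h5 : mA A b = b - 1 :=
        le_antisymm (by have := mA_lt (A := A) (show 0 < b by omega); omega) (le_mA hb1A (by omega))
      rw [h5, Nat.even_iff] at h4
      omega
  by_cases hb1B : b - 1 ∈ B
  · -- adjacent peaks: impossible, and scompat false
    rw [if_neg ?_]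
    · apply Sval_zero
      intro C _ _ hpC
      have hpk := mem_peakOf.mp (hpC ▸ hbB)
      have hpk2 := mem_peakOf.mp (hpC ▸ hb1B)
      exact hpk.2.2 (b-1) (peakOf_subset (hpC ▸ hb1B)) (by omega)
    · rintro ⟨_, _, h3⟩
      have h4 := h3 b hbB
      have h5 := h3 (b-1) hb1B
      have h6 : mA A b = mA A (b-1) := by
        rw [mA, mA]
        congr 1
        ext a
        simp only [Finset.mem_filter, and_congr_right_iff]
        intro haA
        have : a ≠ b - 1 := fun e => hb1A (e ▸ haA)
        omega
      have h7 : mA A (b-1) < b - 1 := mA_lt (by omega)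
      rw [h6, Nat.even_iff] at h4
      rw [Nat.even_iff] at h5
      omega
  -- main case
  have hAlowsub : A.filter (· ≤ b-2) ⊆ Finset.Icc 1 (b-1-1) := by
    intro a ha
    simp only [Finset.mem_filter] at ha
    have := hAbd a ha.1
    simp only [Finset.mem_Icc]
    omega
  have hrec := IH (b-1) (by omega) (by omega) (A.filter (· ≤ b-2)) hAlowsub (B.erase b)
  rw [fib_step hA hb2 hbI.2 hbB hmax hb1A, gsum, hrec]
  -- notation
  set q := (A.filter (· ≤ b-2)).sup id with hq
  have hqmA : mA A b = q := by rw [mA, filterlt_eq_filterle (by omega) hb1A]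
  have hqb : q ≤ b - 2 := by
    apply Finset.sup_le
    intro a ha
    simp only [Finset.mem_filter] at ha
    exact ha.2
  have hcardE : (B.erase b).card = B.card - 1 := Finset.card_erase_of_mem hbB
  have hcardB : 1 ≤ B.card := Finset.card_pos.mpr hBne
  -- the top-sup case analysis
  have hsup_spec : (A.filter (b ≤ ·)).Nonempty →
      A.sup id = (A.filter (b ≤ ·)).sup id ∧ b ≤ (A.filter (b ≤ ·)).sup id := by
    intro hne
    have hmem := sup_id_mem hne
    simp only [Finset.mem_filter] at hmem
    constructor
    · apply le_antisymm
      · apply Finset.sup_le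
        intro a ha
        rcases Nat.lt_or_ge a b with h | h
        · calc a ≤ b := by omega
            _ ≤ (A.filter (b ≤ ·)).sup id := hmem.2
        · exact le_sup_id (Finset.mem_filter.mpr ⟨ha, h⟩)
      · exact le_sup_id hmem.1
    · exact hmem.2
  have hsup_em : A.filter (b ≤ ·) = ∅ → A.sup id = q := by
    intro he
    rw [hq]
    congr 1
    ext a
    simp only [Finset.mem_filter]
    constructor
    · intro ha
      refine ⟨ha, ?_⟩
      have h2 : a ∉ A.filter (b ≤ ·) := by rw [he]; exact Finset.notMem_empty a
      simp only [Finset.mem_filter] at h2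
      have : a ≠ b - 1 := fun e => hb1A (e ▸ ha)
      by_contra hcon
      exact h2 ⟨ha, by omega⟩
    · rintro ⟨ha, _⟩; exact ha
  by_cases hsc : scompat n A B
  · obtain ⟨hodd, _, hpar⟩ := hsc
    have hparb := hpar b hbB
    rw [hqmA, Nat.even_iff] at hparb
    -- top factor is nonzero
    have htop : (max ((A.filter (b ≤ ·)).sup id + 1 - b) 1 ≤ n - b) ∧
        Even (n - b - max ((A.filter (b ≤ ·)).sup id + 1 - b) 1) := by
      rcases (A.filter (b ≤ ·)).eq_empty_or_nonempty with he | hne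
      · have hAq := hsup_em he
        rw [hAq, Nat.odd_iff] at hodd
        rw [he]
        simp only [Finset.sup_empty, Nat.bot_eq_zero]
        constructor
        · simp; omega
        · rw [Nat.even_iff]
          have hmax1 : max (0 + 1 - b) 1 = 1 := by omega
          rw [hmax1]
          omega
      · obtain ⟨hAs, hbs⟩ := hsup_spec hne
        set s := (A.filter (b ≤ ·)).sup id with hs
        have hsn : s ≤ n - 1 := by rw [← hAs]; exact hsupA
        rw [hAs, Nat.odd_iff] at hodd
        have hmax1 : max (s + 1 - b) 1 = s + 1 - b := by omega
        rw [hmax1]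
        constructor
        · omega
        · rw [Nat.even_iff]; omega
    rw [if_pos htop]
    -- recursive scompat holds
    have hsc' : scompat (b-1) (A.filter (· ≤ b-2)) (B.erase b) := by
      refine ⟨?_, ?_, ?_⟩
      · rw [← hq, Nat.odd_iff]; omega
      · intro x hx
        have hxb : x ≠ b := (Finset.mem_erase.mp hx).1
        have hxB := (Finset.mem_erase.mp hx).2
        have h1 := hBbd x hxB
        have h2 := hmax x hxB
        have h3 : x ≠ b - 1 := fun e => hb1B (e ▸ hxB)
        simp only [Finset.mem_Icc]
        omega
      · intro x hx
        have hxb : x ≠ b := (Finset.mem_erase.mp hx).1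
        have hxB := (Finset.mem_erase.mp hx).2
        have h2 := hmax x hxB
        have h3 : x ≠ b - 1 := fun e => hb1B (e ▸ hxB)
        rw [mA_lower (show x ≤ b - 1 by omega)]
        exact hpar x hxB
    rw [if_pos hsc', if_pos ⟨hodd, hBI, hpar⟩]
    rw [← pow_add]
    have hcard2 : B.card - 1 ≤ b - 2 := by
      have : B.erase b ⊆ Finset.Icc 1 (b-2) := by
        intro x hx
        have hxb : x ≠ b := (Finset.mem_erase.mp hx).1
        have hxB := (Finset.mem_erase.mp hx).2
        have h1 := hBbd x hxB
        have h2 := hmax x hxB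
        have h3 : x ≠ b - 1 := fun e => hb1B (e ▸ hxB)
        simp only [Finset.mem_Icc]
        omega
      have := Finset.card_le_card this
      rw [hcardE, Nat.card_Icc] at this
      omega
    congr 1
    rw [hcardE]
    omega
  · rw [if_neg hsc]
    -- show product is zero
    by_cases htop : (max ((A.filter (b ≤ ·)).sup id + 1 - b) 1 ≤ n - b) ∧
        Even (n - b - max ((A.filter (b ≤ ·)).sup id + 1 - b) 1)
    swap
    · rw [if_neg htop, zero_mul]
    by_cases hsc' : scompat (b-1) (A.filter (· ≤ b-2)) (B.erase b)
    swap
    · rw [if_neg hsc', mul_zero]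
    -- derive scompat n A B : contradiction
    exfalso
    apply hsc
    obtain ⟨hodd', hrange', hpar'⟩ := hsc'
    rw [← hq, Nat.odd_iff] at hodd'
    have hparb : (b - q) % 2 = 0 := by omega
    have hOddTop : Odd (n - A.sup id) := by
      rcases (A.filter (b ≤ ·)).eq_empty_or_nonempty with he | hne
      · have hAq := hsup_em he
        rw [hAq, Nat.odd_iff]
        rw [he] at htop
        simp only [Finset.sup_empty, Nat.bot_eq_zero] at htop
        obtain ⟨ht1, ht2⟩ := htop
        have hmax1 : max (0 + 1 - b) 1 = 1 := by omega
        rw [hmax1] at ht1 ht2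
        rw [Nat.even_iff] at ht2
        omega
      · obtain ⟨hAs, hbs⟩ := hsup_spec hne
        set s := (A.filter (b ≤ ·)).sup id with hs
        have hsn : s ≤ n - 1 := by rw [← hAs]; exact hsupA
        rw [hAs, Nat.odd_iff]
        obtain ⟨ht1, ht2⟩ := htop
        have hmax1 : max (s + 1 - b) 1 = s + 1 - b := by omega
        rw [hmax1] at ht1 ht2
        rw [Nat.even_iff] at ht2
        omega
    refine ⟨hOddTop, hBI, ?_⟩
    intro x hx
    rcases eq_or_ne x b with rfl | hne
    · rw [hqmA, Nat.even_iff]; omega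
    · have hxE : x ∈ B.erase b := Finset.mem_erase.mpr ⟨hne, hx⟩
      have := hpar' x hxE
      have h2 := hmax x hx
      have h3 : x ≠ b - 1 := fun e => hb1B (e ▸ hx)
      rwa [mA_lower (show x ≤ b - 1 by omega)] at this

noncomputable def Bp (n : ℕ) (A : Finset ℕ) : Finset ℕ :=
  (Finset.Icc 1 (n-1)).filter (fun x => Even (x - mA A x))

lemma mA_def {A : Finset ℕ} {x : ℕ} : (A.filter (fun y => y < x)).sup id = mA A x := rfl

lemma mem_ODiff {A : Finset ℕ} {a : ℕ} : a ∈ ODiffOf A ↔ a ∈ A ∧ Odd (a - mA A a) := by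
  simp [ODiffOf, mA]

lemma mA_mono {S T : Finset ℕ} (h : S ⊆ T) (x : ℕ) : mA S x ≤ mA T x := by
  apply Finset.sup_le
  intro a ha
  simp only [Finset.mem_filter] at ha
  exact le_mA (h ha.1) ha.2

lemma mA_stable {A : Finset ℕ} {x y : ℕ} (hxy : x ≤ y)
    (hno : ∀ a ∈ A, a < y → a < x) : mA A x = mA A y := by
  rw [mA, mA]
  congr 1
  ext a
  simp only [Finset.mem_filter, and_congr_right_iff]
  intro ha
  exact ⟨fun h => by omega, hno a ha⟩

lemma mA_succ_mem {A : Finset ℕ} {x : ℕ} (hx : x ∈ A) : mA A (x+1) = x :=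
  le_antisymm (by have := mA_lt (A := A) (show 0 < x + 1 by omega); omega)
    (le_mA hx (by omega))

lemma mA_succ_notMem {A : Finset ℕ} {x : ℕ} (hx : x ∉ A) : mA A (x+1) = mA A x := by
  symm
  apply mA_stable (by omega)
  intro a ha h
  have : a ≠ x := fun e => hx (e ▸ ha)
  omega

/-- parity chain: predecessor in `A` and in `ODiffOf A` have even distance -/
lemma chainE {A : Finset ℕ} (hA : ∀ a ∈ A, 1 ≤ a) :
    ∀ y : ℕ, mA (ODiffOf A) y ≤ mA A y ∧ Even (mA A y - mA (ODiffOf A) y) := by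
  intro y
  induction y using Nat.strong_induction_on with
  | _ y IH =>
  have hsub : ODiffOf A ⊆ A := fun a ha => (Finset.mem_filter.mp ha).1
  have hmono := mA_mono hsub y
  rcases (A.filter (fun a => a < y)).eq_empty_or_nonempty with he | hne
  · have h0 : mA A y = 0 := by rw [mA, he]; rfl
    constructor
    · rw [h0] at hmono ⊢; exact hmono
    · rw [h0, Nat.even_iff]; omega
  · have hpA : mA A y ∈ A ∧ mA A y < y := by
      have := sup_id_mem hne
      simp only [Finset.mem_filter] at this
      exact this
    by_cases hpO : mA A y ∈ ODiffOf A
    · have he2 : mA (ODiffOf A) y = mA A y := le_antisymm hmono (le_mA hpO hpA.2)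
      refine ⟨hmono, ?_⟩
      rw [he2, Nat.even_iff]
      omega
    · have hObd : mA (ODiffOf A) y = mA (ODiffOf A) (mA A y) := by
        symm
        apply mA_stable (by omega)
        intro c hc hcy
        have hcA : c ∈ A := (Finset.mem_filter.mp hc).1
        have hcp : c ≤ mA A y := le_mA hcA hcy
        have : c ≠ mA A y := fun e => hpO (e ▸ hc)
        omega
      have hOp : (mA A y - mA A (mA A y)) % 2 = 0 := by
        rcases Nat.even_or_odd (mA A y - mA A (mA A y)) with h | h
        · rwa [Nat.even_iff] at h
        · exact absurd (mem_ODiff.mpr ⟨hpA.1, h⟩) hpO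
      obtain ⟨ih1, ih2⟩ := IH (mA A y) hpA.2
      have hmp : mA A (mA A y) ≤ mA A y := by
        have := mA_lt (A := A) (show 0 < mA A y from hA _ hpA.1)
        omega
      rw [Nat.even_iff] at ih2
      constructor
      · rw [hObd]; omega
      · rw [hObd, Nat.even_iff]; omega

lemma mA_top {A : Finset ℕ} {n : ℕ} (hA : ∀ a ∈ A, a ≤ n - 1) (hn : 1 ≤ n) :
    mA A n = A.sup id := by
  rw [mA]
  congr 1
  apply Finset.filter_true_of_mem
  intro a ha
  have := hA a ha
  omega

/-- Task IIa -/
lemma ODiff_isOddSet {n : ℕ} {A : Finset ℕ} (hn : 1 ≤ n) (hA : A ⊆ Finset.Icc 1 (n-1))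
    (hodd : Odd (n - A.sup id)) : IsOddSet n (ODiffOf A) := by
  have hAbd : ∀ a ∈ A, 1 ≤ a ∧ a ≤ n - 1 := by
    intro a ha; have := hA ha; simpa using this
  have hA1 : ∀ a ∈ A, 1 ≤ a := fun a ha => (hAbd a ha).1
  constructor
  · exact le_trans (Finset.filter_subset _ A) hA
  · intro a ha
    rw [Finset.mem_insert] at ha
    rw [mA_def]
    rcases ha with rfl | ha
    · -- a = n
      obtain ⟨h1, h2⟩ := chainE hA1 a
      have h3 : mA A a = A.sup id := mA_top (fun x hx => (hAbd x hx).2) hn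
      have h4 : mA (ODiffOf A) a ≤ mA A a := h1
      rw [Nat.odd_iff] at hodd ⊢
      rw [Nat.even_iff] at h2
      have h5 : A.sup id ≤ a - 1 := by
        apply Finset.sup_le
        intro x hx
        have := (hAbd x hx).2
        simp only [id]
        omega
      show (a - mA (ODiffOf A) a) % 2 = 1
      omega
    · rw [mem_ODiff] at ha
      obtain ⟨haA, haO⟩ := ha
      obtain ⟨h1, h2⟩ := chainE hA1 a
      have h3 : mA A a < a := mA_lt (hA1 a haA)
      rw [Nat.odd_iff] at haO ⊢
      rw [Nat.even_iff] at h2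
      show (a - mA (ODiffOf A) a) % 2 = 1
      omega

lemma mem_Bp {n : ℕ} {A : Finset ℕ} {x : ℕ} :
    x ∈ Bp n A ↔ (1 ≤ x ∧ x ≤ n - 1) ∧ Even (x - mA A x) := by
  simp [Bp, Finset.mem_Icc]

lemma Bp_no_adjacent {n : ℕ} {A : Finset ℕ} {x : ℕ}
    (h1 : x ∈ Bp n A) (h2 : x + 1 ∈ Bp n A) : False := by
  rw [mem_Bp] at h1 h2
  by_cases hx : x ∈ A
  · rw [mA_succ_mem hx] at h2
    obtain ⟨-, h2⟩ := h2
    rw [Nat.even_iff] at h2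
    omega
  · rw [mA_succ_notMem hx] at h2
    have h3 : mA A x ≤ x := by
      rcases Nat.eq_zero_or_pos x with rfl | hp
      · have he : A.filter (fun a => a < 0) = ∅ :=
          Finset.filter_false_of_mem (fun a _ => by omega)
        rw [mA]
        rw [show (A.filter (· < 0)) = A.filter (fun a => a < 0) from rfl, he]
        simp
      · exact le_of_lt (mA_lt hp)
    obtain ⟨-, h2⟩ := h2
    obtain ⟨-, h1⟩ := h1
    rw [Nat.even_iff] at h1 h2
    omega

/-- Task IIb part 1 -/
lemma Bp_isPeakSet {n : ℕ} {A : Finset ℕ} (hA : ∀ a ∈ A, 1 ≤ a) :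
    IsPeakSet n (Bp n A) := by
  constructor
  · intro x hx
    rw [mem_Bp] at hx
    obtain ⟨⟨hx1, hx2⟩, hx3⟩ := hx
    simp only [Finset.mem_Icc]
    refine ⟨?_, hx2⟩
    by_contra h
    have hx1' : x = 1 := by omega
    subst hx1'
    have : mA A 1 = 0 := by
      have := mA_lt (A := A) one_pos
      omega
    rw [this, Nat.even_iff] at hx3
    omega
  · intro b hb
    constructor
    · intro hcon
      have hb2 : 2 ≤ b := by
        rw [mem_Bp] at hb hcon
        rcases Nat.lt_or_ge b 2 with h | h
        · interval_cases b
          · omega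
          · exfalso
            obtain ⟨⟨h1, _⟩, _⟩ := hcon
            omega
        · exact h
      have : b - 1 + 1 = b := by omega
      exact Bp_no_adjacent hcon (by rwa [this])
    · intro hcon
      exact Bp_no_adjacent hb hcon

/-- Task IIb part 2 -/
lemma Bp_oddSet {n : ℕ} {A : Finset ℕ} (hn : 1 ≤ n) (hA : A ⊆ Finset.Icc 1 (n-1))
    (hodd : Odd (n - A.sup id)) : OddSetOf n (Bp n A) = ODiffOf A := by
  have hAbd : ∀ a ∈ A, 1 ≤ a ∧ a ≤ n - 1 := by
    intro a ha; have := hA ha; simpa using this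
  ext x
  simp only [OddSetOf, Finset.mem_sdiff, Finset.mem_union, Finset.mem_image, not_or,
    not_exists, Finset.mem_Icc, mem_ODiff]
  constructor
  · rintro ⟨⟨hx1, hx2⟩, hxB, hxI⟩
    rw [mem_Bp] at hxB
    have hxOdd : Odd (x - mA A x) := by
      rcases Nat.even_or_odd (x - mA A x) with h | h
      · exact absurd ⟨⟨hx1, hx2⟩, h⟩ hxB
      · exact h
    refine ⟨?_, hxOdd⟩
    by_contra hxA
    -- then x+1 would be in Bp, or x = n-1 violates top parity
    rcases Nat.lt_or_ge x (n-1) with h | h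
    · have hx1B : x + 1 ∈ Bp n A := by
        rw [mem_Bp, mA_succ_notMem hxA]
        constructor
        · omega
        · rw [Nat.even_iff]
          rw [Nat.odd_iff] at hxOdd
          have : mA A x ≤ x := le_of_lt (mA_lt (by omega))
          omega
      exact hxI (x+1) ⟨hx1B, by omega⟩
    · -- x = n-1
      have hxe : x = n - 1 := by omega
      have hsup : mA A x = A.sup id := by
        rw [mA]
        congr 1
        apply Finset.filter_true_of_mem
        intro a ha
        have h2 := (hAbd a ha).2
        have : a ≠ x := fun e => hxA (e ▸ ha)
        omega
      rw [hsup] at hxOdd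
      rw [Nat.odd_iff] at hxOdd hodd
      have : A.sup id ≤ x := by
        apply Finset.sup_le
        intro a ha
        have := (hAbd a ha).2
        simp only [id]
        omega
      omega
  · rintro ⟨hxA, hxOdd⟩
    have hx1 := (hAbd x hxA).1
    have hx2 := (hAbd x hxA).2
    refine ⟨⟨hx1, hx2⟩, ?_, ?_⟩
    · rw [mem_Bp]
      rintro ⟨-, hcon⟩
      rw [Nat.even_iff] at hcon
      rw [Nat.odd_iff] at hxOdd
      omega
    · intro b hbB
      obtain ⟨hbB, hbx⟩ := hbB
      rw [mem_Bp] at hbB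
      obtain ⟨⟨hb1, _⟩, hbE⟩ := hbB
      have hbx1 : b = x + 1 := by omega
      subst hbx1
      rw [mA_succ_mem hxA, Nat.even_iff] at hbE
      omega

lemma mem_oddSetOf {n : ℕ} {B : Finset ℕ} {x : ℕ} :
    x ∈ OddSetOf n B ↔ (1 ≤ x ∧ x ≤ n-1) ∧ x ∉ B ∧ ∀ b ∈ B, b - 1 ≠ x := by
  simp only [OddSetOf, Finset.mem_sdiff, Finset.mem_union, Finset.mem_image, not_or,
    not_exists, Finset.mem_Icc]
  aesop

/-- uniqueness of the peak set with a given odd set -/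
lemma peakset_unique {n : ℕ} {B1 B2 : Finset ℕ} (h1 : IsPeakSet n B1)
    (h2 : IsPeakSet n B2) (h : OddSetOf n B1 = OddSetOf n B2) : B1 = B2 := by
  have key : ∀ B, IsPeakSet n B → ∀ x, x ∈ B ↔
      ((1 ≤ x ∧ x ≤ n-1) ∧ x ∉ OddSetOf n B ∧ x + 1 ∉ B) := by
    intro B hB x
    constructor
    · intro hx
      have hxI := hB.1 hx
      simp only [Finset.mem_Icc] at hxI
      refine ⟨⟨by omega, hxI.2⟩, ?_, (hB.2 x hx).2⟩
      rw [mem_oddSetOf]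
      rintro ⟨-, hc, -⟩
      exact hc hx
    · rintro ⟨⟨hx1, hx2⟩, hxO, hx1B⟩
      rw [mem_oddSetOf] at hxO
      push_neg at hxO
      by_cases hxB : x ∈ B
      · exact hxB
      · exfalso
        obtain ⟨b, hb, hbx⟩ := hxO ⟨hx1, hx2⟩ hxB
        have h2b : 2 ≤ b := by
          have := hB.1 hb
          simp only [Finset.mem_Icc] at this
          omega
        have hbe : b = x + 1 := by omega
        exact hx1B (hbe ▸ hb)
  have step : ∀ k, ∀ x, n - x ≤ k → (x ∈ B1 ↔ x ∈ B2) := by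
    intro k
    induction k with
    | zero =>
      intro x hx
      constructor
      · intro hc
        have := h1.1 hc
        simp only [Finset.mem_Icc] at this
        omega
      · intro hc
        have := h2.1 hc
        simp only [Finset.mem_Icc] at this
        omega
    | succ k ih =>
      intro x hx
      rcases Nat.lt_or_ge x n with hlt | hge
      · rw [key B1 h1 x, key B2 h2 x, h, ih (x+1) (by omega)]
      · constructor
        · intro hc
          have := h1.1 hc
          simp only [Finset.mem_Icc] at this
          omega
        · intro hc
          have := h2.1 hc
          simp only [Finset.mem_Icc] at this
          omega
  ext x
  exact step (n - x) x le_rfl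

lemma scompat_iff_subset {n : ℕ} {A B'' : Finset ℕ} (hodd : Odd (n - A.sup id))
    (hB'' : B'' ⊆ Finset.Icc 1 (n-1)) : scompat n A B'' ↔ B'' ⊆ Bp n A := by
  constructor
  · rintro ⟨-, -, hpar⟩
    intro b hb
    rw [mem_Bp]
    have := hB'' hb
    simp only [Finset.mem_Icc] at this
    exact ⟨this, hpar b hb⟩
  · intro h
    exact ⟨hodd, hB'', fun b hb => (mem_Bp.mp (h hb)).2⟩

/-- If `n − max A` is odd then `ODiff(A)` is an odd set and, for the unique peak set `B`
with `Odd(B) = ODiff(A)`, `Σ_{A ⊆ C ⊆ [n−1]} (−1)^{|C|} K_{(Peak(C),σ)}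
= (−1)^{n−1−|B|} η_{(B,σ)}`; if `n − max A` is even the sum vanishes. -/
theorem stmt11 (n : ℕ) (hn : 1 ≤ n) (A : Finset ℕ) (hA : A ⊆ Finset.Icc 1 (n - 1))
    (hAne : A.Nonempty) (σ : Equiv.Perm ℕ) (hσ : IsPermOn n σ) :
    (Odd (n - A.max' hAne) →
      IsOddSet n (ODiffOf A) ∧
      (∃ B : Finset ℕ, IsPeakSet n B ∧ OddSetOf n B = ODiffOf A) ∧
      ∀ B : Finset ℕ, IsPeakSet n B → OddSetOf n B = ODiffOf A →
        (∑ C ∈ (Finset.Icc 1 (n - 1)).powerset.filter (fun C => A ⊆ C),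
            ((-1 : ℚ)) ^ C.card • Kfun n (PeakOf C) σ) =
          ((-1 : ℚ)) ^ (n - 1 - B.card) • etaFun n B σ) ∧
    (¬ Odd (n - A.max' hAne) →
      (∑ C ∈ (Finset.Icc 1 (n - 1)).powerset.filter (fun C => A ⊆ C),
          ((-1 : ℚ)) ^ C.card • Kfun n (PeakOf C) σ) = 0) := by
  have hmax : A.max' hAne = A.sup id := (sup_id_eq_max' hAne).symm
  rw [hmax]
  have hgroup : ∀ u : ℕ → ℕ+,
      (∑ C ∈ (Finset.Icc 1 (n - 1)).powerset.filter (fun C => A ⊆ C),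
        ((-1 : ℚ)) ^ C.card • Kfun n (PeakOf C) σ) u
      = ∑ B'' ∈ (Finset.Icc 1 (n-1)).powerset,
          (if scompat n A B'' then (-1:ℚ)^(n-1-B''.card) else 0) * Kfun n B'' σ u := by
    intro u
    rw [Finset.sum_apply]
    have hmap : ∀ C ∈ (Finset.Icc 1 (n - 1)).powerset.filter (fun C => A ⊆ C),
        PeakOf C ∈ (Finset.Icc 1 (n-1)).powerset := by
      intro C hC
      rw [Finset.mem_filter, Finset.mem_powerset] at hC
      exact Finset.mem_powerset.mpr (peakOf_subset.trans hC.1)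
    rw [← Finset.sum_fiberwise_of_maps_to hmap
      (fun C => (((-1 : ℚ)) ^ C.card • Kfun n (PeakOf C) σ) u)]
    apply Finset.sum_congr rfl
    intro B'' _
    rw [← Sval_eq n hn A hA B'', Sval, Finset.sum_mul]
    have hidx : ((Finset.Icc 1 (n - 1)).powerset.filter (fun C => A ⊆ C)).filter
        (fun C => PeakOf C = B'') = fib n A B'' := by
      rw [fib, Finset.filter_filter]
    rw [hidx]
    apply Finset.sum_congr rfl
    intro C hC
    rw [mem_fib] at hC
    rw [Pi.smul_apply, smul_eq_mul, hC.2.2]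
  constructor
  · intro hodd
    refine ⟨ODiff_isOddSet hn hA hodd, ⟨Bp n A, Bp_isPeakSet (fun a ha => by
        have := hA ha; simp only [Finset.mem_Icc] at this; exact this.1),
      Bp_oddSet hn hA hodd⟩, ?_⟩
    intro B hBpeak hBodd
    have hBeq : B = Bp n A := by
      apply peakset_unique hBpeak (Bp_isPeakSet (fun a ha => by
        have := hA ha; simp only [Finset.mem_Icc] at this; exact this.1))
      rw [hBodd, Bp_oddSet hn hA hodd]
    have hBIcc : B ⊆ Finset.Icc 1 (n-1) := by
      rw [hBeq]
      intro x hx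
      rw [mem_Bp] at hx
      simp only [Finset.mem_Icc]
      exact hx.1
    have hBcard : B.card ≤ n - 1 := by
      have := Finset.card_le_card hBIcc
      rwa [Nat.card_Icc, Nat.add_sub_cancel] at this
    funext u
    rw [hgroup u]
    have hterm : ∀ B'' ∈ (Finset.Icc 1 (n-1)).powerset,
        (if scompat n A B'' then (-1:ℚ)^(n-1-B''.card) else 0) * Kfun n B'' σ u
        = if B'' ⊆ B then (-1:ℚ)^(n-1-B''.card) * Kfun n B'' σ u else 0 := by
      intro B'' hB''
      rw [Finset.mem_powerset] at hB''
      rw [scompat_iff_subset hodd hB'', ← hBeq]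
      by_cases h : B'' ⊆ B
      · rw [if_pos h, if_pos h]
      · rw [if_neg h, if_neg h, zero_mul]
    rw [Finset.sum_congr rfl hterm, ← Finset.sum_filter]
    have hidx2 : (Finset.Icc 1 (n-1)).powerset.filter (fun B'' => B'' ⊆ B) = B.powerset := by
      ext C
      simp only [Finset.mem_filter, Finset.mem_powerset]
      constructor
      · exact fun h => h.2
      · exact fun h => ⟨h.trans hBIcc, h⟩
    rw [hidx2, Pi.smul_apply, etaFun, Finset.sum_apply, smul_eq_mul, Finset.mul_sum]
    apply Finset.sum_congr rfl
    intro c hc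
    rw [Finset.mem_powerset] at hc
    have hccard : c.card ≤ B.card := Finset.card_le_card hc
    rw [Pi.smul_apply, smul_eq_mul, ← mul_assoc, ← pow_add]
    congr 2
    omega
  · intro hodd
    funext u
    rw [Pi.zero_apply, hgroup u]
    apply Finset.sum_eq_zero
    intro B'' _
    rw [if_neg (fun hc => hodd hc.1), zero_mul]
end
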